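/- arXiv:0912.0232 — 3 statements merged into one kernel-verified Lean document; each statement's English description precedes it below -/
import Mathlib

section
/- For every real z with |z| < 1/m, the series B(z) = Σ_{k=0}^{∞} B_k z^k converges absolutely and B(z) = ( −(m−2) + m √(1 − 4(m−1) z²) ) / ( 2 (1 − m² z²) ), where √ denotes the nonnegative real square root. -/
open Finset SimpleGraph

set_option linter.unusedSectionVars false
set_option maxHeartbeats 1000000

namespace StmtAux

section Trees
variable {V : Type} [DecidableEq V] {G : SimpleGraph V}


lemma tree_sep (hacyc : G.IsAcyclic) {v w u x : V} (hw : G.Adj v w) (hu : G.Adj v u)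
    (hne : w ≠ u) {s : G.Walk w x} (hv : v ∉ s.support) : u ∉ s.support := by
  intro husup
  have hvt : v ∉ (s.takeUntil u husup).support :=
    fun h => hv (s.support_takeUntil_subset husup h)
  have hvP1 : v ∉ ((s.takeUntil u husup).toPath : G.Walk w u).support :=
    fun h => hvt ((s.takeUntil u husup).support_toPath_subset h)
  have hP2 : (Walk.cons hw.symm (Walk.cons hu Walk.nil) : G.Walk w u).IsPath := by
    rw [Walk.isPath_def]
    simp [hw.ne', hne, hu.ne]
  have := hacyc.path_unique ((s.takeUntil u husup).toPath) ⟨_, hP2⟩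
  rw [this] at hvP1
  simp at hvP1

lemma append_right_cancel : ∀ {a b c : V} (s1 : G.Walk a b) (s2 s2' : G.Walk b c),
    s1.append s2 = s1.append s2' → s2 = s2' := by
  intro a b c s1
  induction s1 with
  | nil => intro s2 s2' h; simpa using h
  | cons hadj p ih =>
    intro s2 s2' h
    rw [Walk.cons_append, Walk.cons_append] at h
    injection h with h1 h2 h3 h4
    exact ih _ _ h4

lemma first_unique : ∀ {w c x : V} (s1 s1' : G.Walk w c) (s2 s2' : G.Walk c x),
    s1.support.count c = 1 → s1'.support.count c = 1 →
    s1.append s2 = s1'.append s2' → s1 = s1' := by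
  intro w c x s1
  induction s1 with
  | nil =>
    intro s1' s2 s2' h1 h1' heq
    cases s1' with
    | nil => rfl
    | @cons a b c' h p =>
      exfalso
      have hmem : _ ∈ p.support := p.end_mem_support
      have : 1 ≤ p.support.count _ := List.count_pos_iff.mpr hmem
      rw [Walk.support_cons, List.count_cons] at h1'
      simp at h1'
      omega
  | @cons a b c' h p ih =>
    intro s1' s2 s2' h1 h1' heq
    have hmem : _ ∈ p.support := p.end_mem_support
    have hp1 : 1 ≤ p.support.count _ := List.count_pos_iff.mpr hmem
    cases s1' with
    | nil =>
      exfalso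
      rw [Walk.support_cons, List.count_cons] at h1
      simp at h1
      omega
    | @cons a' b' c'' h' p' =>
      rw [Walk.cons_append, Walk.cons_append] at heq
      injection heq with e1 e2 e3 e4
      subst e2
      have hps : p = p' := by
        apply ih p' s2 s2'
        · rw [Walk.support_cons, List.count_cons] at h1
          omega
        · have hmem' : _ ∈ p'.support := p'.end_mem_support
          have hp1' : 1 ≤ p'.support.count _ := List.count_pos_iff.mpr hmem'
          rw [Walk.support_cons, List.count_cons] at h1'
          omega
        · exact eq_of_heq e4
      subst hps
      rfl

lemma first_exists : ∀ {w c : V} (q : G.Walk w c),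
    ∃ (s1 : G.Walk w c) (s2 : G.Walk c c), q = s1.append s2 ∧ s1.support.count c = 1 := by
  intro w c q
  induction q with
  | nil => exact ⟨Walk.nil, Walk.nil, rfl, by simp⟩
  | @cons a b c' h p ih =>
    by_cases hwc : a = c'
    · subst hwc
      exact ⟨Walk.nil, Walk.cons h p, (Walk.nil_append _).symm, by simp⟩
    · obtain ⟨t1, t2, hq, hc⟩ := ih
      refine ⟨Walk.cons h t1, t2, ?_, ?_⟩
      · rw [Walk.cons_append, hq]
      · rw [Walk.support_cons, List.count_cons]
        simp [hwc, hc]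

lemma peel (hacyc : G.IsAcyclic) {v w : V} (hw : G.Adj v w) (s1 : G.Walk w v)
    (hc : s1.support.count v = 1) :
    ∃ (t : G.Walk w w) (h' : G.Adj w v), s1 = t.concat h' ∧ v ∉ t.support := by
  cases s1 with
  | nil => exact absurd hw (G.irrefl)
  | @cons a b c' h p =>
    obtain ⟨x, q, h', hqc⟩ := Walk.exists_cons_eq_concat h p
    have hvq : v ∉ q.support := by
      rw [hqc, Walk.support_concat, List.count_append] at hc
      simp at hc
      exact List.count_eq_zero.mp hc
    have hxw : x = w := by
      by_contra hxw
      have := tree_sep hacyc hw h'.symm (fun hh => hxw hh.symm) hvq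
      exact this q.end_mem_support
    subst hxw
    exact ⟨q, h', hqc, hvq⟩


end Trees

/-- Excursion-count sequence: `aseq m (2k) = catalan k * (m-1)^k`, odd terms vanish. -/
def aseq (m : ℕ) : ℕ → ℕ := fun n => if 2 ∣ n then catalan (n / 2) * (m - 1) ^ (n / 2) else 0

lemma aseq_zero (m : ℕ) : aseq m 0 = 1 := by simp [aseq]

lemma aseq_one (m : ℕ) : aseq m 1 = 0 := by norm_num [aseq]

lemma aseq_odd (m : ℕ) {n : ℕ} (h : ¬ 2 ∣ n) : aseq m n = 0 := by simp [aseq, h]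

lemma aseq_even (m k : ℕ) : aseq m (2 * k) = catalan k * (m - 1) ^ k := by
  simp [aseq, Nat.mul_div_cancel_left k (by norm_num : 0 < 2)]

lemma aseq_rec (m n : ℕ) :
    aseq m (n + 2) = (m - 1) * ∑ ij ∈ antidiagonal n, aseq m ij.1 * aseq m ij.2 := by
  by_cases h2 : 2 ∣ n
  · obtain ⟨s, rfl⟩ := h2
    have hL : aseq m (2 * s + 2) = catalan (s + 1) * (m - 1) ^ (s + 1) := by
      have : 2 * s + 2 = 2 * (s + 1) := by ring
      rw [this, aseq_even]
    rw [hL]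
    have hsum : ∑ ij ∈ antidiagonal (2 * s), aseq m ij.1 * aseq m ij.2
        = ∑ pq ∈ antidiagonal s,
            (catalan pq.1 * (m - 1) ^ pq.1) * (catalan pq.2 * (m - 1) ^ pq.2) := by
      have hfil : ∑ ij ∈ (antidiagonal (2 * s)).filter (fun ij => 2 ∣ ij.1),
          aseq m ij.1 * aseq m ij.2 = ∑ ij ∈ antidiagonal (2 * s), aseq m ij.1 * aseq m ij.2 :=
        Finset.sum_filter_of_ne (fun x hx hfx => by
          by_contra hodd
          exact hfx (by rw [show aseq m x.1 = 0 from aseq_odd m hodd, zero_mul]))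
      rw [← hfil]
      refine Finset.sum_nbij' (fun ij => (ij.1 / 2, ij.2 / 2)) (fun pq => (2 * pq.1, 2 * pq.2))
        ?_ ?_ ?_ ?_ ?_
      · intro a ha
        simp only [mem_filter, Finset.HasAntidiagonal.mem_antidiagonal] at ha
        obtain ⟨h1, h2⟩ := ha
        simp only [Finset.HasAntidiagonal.mem_antidiagonal]
        omega
      · intro a ha
        simp only [Finset.HasAntidiagonal.mem_antidiagonal] at ha
        simp only [mem_filter, Finset.HasAntidiagonal.mem_antidiagonal]
        omega
      · intro a ha
        simp only [mem_filter, Finset.HasAntidiagonal.mem_antidiagonal] at ha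
        obtain ⟨h1, h2⟩ := ha
        have h3 : 2 ∣ a.2 := by omega
        obtain ⟨p, hp⟩ := h2
        obtain ⟨q, hq⟩ := h3
        have hae : a = (2 * p, 2 * q) := by rw [Prod.ext_iff]; exact ⟨hp, hq⟩
        subst hae
        simp [Nat.mul_div_cancel_left]
      · intro a _
        simp
      · intro a ha
        simp only [mem_filter, Finset.HasAntidiagonal.mem_antidiagonal] at ha
        obtain ⟨h1, h2⟩ := ha
        have h3 : 2 ∣ a.2 := by omega
        obtain ⟨p, hp⟩ := h2
        obtain ⟨q, hq⟩ := h3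
        have hae : a = (2 * p, 2 * q) := by rw [Prod.ext_iff]; exact ⟨hp, hq⟩
        subst hae
        dsimp only
        rw [Nat.mul_div_cancel_left p (by norm_num : 0 < 2),
          Nat.mul_div_cancel_left q (by norm_num : 0 < 2), aseq_even, aseq_even]
    rw [hsum]
    have hsum2 : ∑ pq ∈ antidiagonal s,
        (catalan pq.1 * (m - 1) ^ pq.1) * (catalan pq.2 * (m - 1) ^ pq.2)
        = (m - 1) ^ s * ∑ pq ∈ antidiagonal s, catalan pq.1 * catalan pq.2 := by
      rw [Finset.mul_sum]
      refine Finset.sum_congr rfl ?_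
      intro pq hpq
      have := mem_antidiagonal.mp hpq
      rw [← this, pow_add]
      ring
    rw [hsum2, ← catalan_succ']
    ring
  · rw [aseq_odd m (by omega)]
    have : ∑ ij ∈ antidiagonal n, aseq m ij.1 * aseq m ij.2 = 0 := by
      refine Finset.sum_eq_zero ?_
      intro ij hij
      have := mem_antidiagonal.mp hij
      by_cases hi : 2 ∣ ij.1
      · rw [show aseq m ij.2 = 0 from aseq_odd m (by omega), mul_zero]
      · rw [show aseq m ij.1 = 0 from aseq_odd m hi, zero_mul]
    rw [this, mul_zero]


section Counting
variable {V : Type} [DecidableEq V] {G : SimpleGraph V} [∀ v : V, Fintype (G.neighborSet v)]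


lemma finite_cond (w w' : V) (i : ℕ) (P : G.Walk w w' → Prop) :
    Finite {t : G.Walk w w' // t.length = i ∧ P t} := by
  haveI : Fintype {p : G.Walk w w' // p.length = i} := SimpleGraph.fintypeSubtypeWalkLength G w w' i
  exact Finite.of_injective
    (fun t => (⟨t.1, t.2.1⟩ : {p : G.Walk w w' // p.length = i}))
    (by
      intro t t' h
      apply Subtype.ext
      have := congrArg Subtype.val h
      simpa using this)

lemma card_sigma' {ι : Type} [Fintype ι] (f : ι → Type) [∀ i, Finite (f i)] :
    Nat.card ((i : ι) × f i) = ∑ i, Nat.card (f i) := by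
  letI : ∀ i, Fintype (f i) := fun i => Fintype.ofFinite _
  simp [Nat.card_eq_fintype_card]



lemma card_rec (hacyc : G.IsAcyclic) (v : V) (F : V → Prop) [DecidablePred F] (hFv : ¬ F v)
    (hsep : ∀ w, G.Adj v w → ¬ F w → ∀ (x : V) (t : G.Walk w x), v ∉ t.support →
      ∀ y ∈ t.support, ¬ F y) (n : ℕ) :
    Nat.card {p : G.Walk v v // p.length = n + 2 ∧ ∀ y ∈ p.support, ¬ F y} =
    ∑ w ∈ (G.neighborFinset v).filter (fun w => ¬ F w), ∑ ij ∈ antidiagonal n,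
      Nat.card {t : G.Walk w w // t.length = ij.1 ∧ v ∉ t.support} *
      Nat.card {d : G.Walk v v // d.length = ij.2 ∧ ∀ y ∈ d.support, ¬ F y} := by
  haveI I1 : ∀ (w : V) (i : ℕ), Finite {t : G.Walk w w // t.length = i ∧ v ∉ t.support} :=
    fun w i => finite_cond w w i _
  haveI I2 : ∀ (i : ℕ), Finite {d : G.Walk v v // d.length = i ∧ ∀ y ∈ d.support, ¬ F y} :=
    fun i => finite_cond v v i _
  set S := (G.neighborFinset v).filter (fun w => ¬ F w) with hS
  have hmemS : ∀ x : V, x ∈ S → G.Adj v x ∧ ¬ F x := by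
    intro x hx
    rw [hS, mem_filter, mem_neighborFinset] at hx
    exact hx
  have hadj : ∀ w : {w // w ∈ S}, G.Adj v w.1 := fun w => (hmemS w.1 w.2).1
  have hFne : ∀ w : {w // w ∈ S}, ¬ F w.1 := fun w => (hmemS w.1 w.2).2
  have glue_good : ∀ (w : V) (h : G.Adj v w), ¬ F w → ∀ (t : G.Walk w w) (d : G.Walk v v),
      v ∉ t.support → (∀ y ∈ d.support, ¬ F y) →
      ∀ y ∈ (Walk.cons h ((t.concat h.symm).append d)).support, ¬ F y := by
    intro w h hFw t d hvt hd y hy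
    rw [Walk.support_cons] at hy
    rcases List.mem_cons.mp hy with rfl | hy
    · exact hFv
    · rw [Walk.mem_support_append_iff] at hy
      rcases hy with hy | hy
      · rw [Walk.support_concat] at hy
        rcases List.mem_append.mp hy with hy | hy
        · exact hsep w h hFw w t hvt y hy
        · obtain rfl := List.mem_singleton.mp hy
          exact hFv
      · exact hd y hy
  let T := (w : {w // w ∈ S}) × (ij : {ij : ℕ × ℕ // ij ∈ antidiagonal n}) ×
      ({t : G.Walk w.1 w.1 // t.length = ij.1.1 ∧ v ∉ t.support} ×
       {d : G.Walk v v // d.length = ij.1.2 ∧ ∀ y ∈ d.support, ¬ F y})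
  let Φ : T → {p : G.Walk v v // p.length = n + 2 ∧ ∀ y ∈ p.support, ¬ F y} :=
    fun x => ⟨Walk.cons (hadj x.1) ((x.2.2.1.1.concat (hadj x.1).symm).append x.2.2.2.1), by
      constructor
      · have h1 := x.2.2.1.2.1
        have h2 := x.2.2.2.2.1
        have h3 := mem_antidiagonal.mp x.2.1.2
        simp only [Walk.length_cons, Walk.length_append, Walk.length_concat]
        omega
      · exact glue_good _ _ (hFne x.1) _ _ x.2.2.1.2.2 (fun y hy => x.2.2.2.2.2 y hy)⟩
  have hbij : Function.Bijective Φ := by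
    constructor
    · rintro ⟨⟨w, hw⟩, ⟨⟨i, j⟩, hij⟩, ⟨t, ht⟩, ⟨d, hd⟩⟩ ⟨⟨w', hw'⟩, ⟨⟨i', j'⟩, hij'⟩, ⟨t', ht'⟩, ⟨d', hd'⟩⟩ h
      have h' := congrArg Subtype.val h
      simp only [Φ] at h'
      injection h' with e1 e2 e3 e4
      subst e2
      replace e4 := eq_of_heq e4
      have hcount : ∀ (tt : G.Walk w w) (hh : G.Adj w v), v ∉ tt.support →
          (tt.concat hh).support.count v = 1 := by
        intro tt hh hvtt
        rw [Walk.support_concat, List.count_append]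
        simp [List.count_eq_zero.mpr hvtt]
      have hfirst : t.concat (hadj ⟨w, hw⟩).symm = t'.concat (hadj ⟨w, hw'⟩).symm :=
        first_unique _ _ _ _ (hcount t _ ht.2) (hcount t' _ ht'.2) e4
      have hd2 : d = d' := by
        apply append_right_cancel _ d d'
        rw [hfirst] at e4
        exact e4
      have ht2 : t = t' := by
        have hrev := congrArg Walk.reverse hfirst
        rw [Walk.reverse_concat, Walk.reverse_concat] at hrev
        injection hrev with f1 f2 f3 f4
        have := congrArg Walk.reverse f4
        simpa using this
      subst ht2
      subst hd2
      have hii : i = i' := ht.1.symm.trans ht'.1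
      subst hii
      have hjj : j = j' := by
        have := mem_antidiagonal.mp hij
        have := mem_antidiagonal.mp hij'
        omega
      subst hjj
      rfl
    · rintro ⟨p, hlen, hgood⟩
      cases p with
      | nil => simp at hlen
      | @cons a b c' hadj0 q =>
        have hFw : ¬ F b :=
          hgood b (by rw [Walk.support_cons]; exact List.mem_cons_of_mem _ q.start_mem_support)
        have hwS : b ∈ S := by rw [hS, mem_filter, mem_neighborFinset]; exact ⟨hadj0, hFw⟩
        obtain ⟨s1, s2, hq, hc1⟩ := first_exists q
        obtain ⟨t, h', hs1, hvt⟩ := peel hacyc hadj0 s1 hc1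
        subst hs1
        subst hq
        have hlen' : t.length + s2.length = n := by
          rw [Walk.length_cons, Walk.length_append, Walk.length_concat] at hlen
          omega
        refine ⟨⟨⟨b, hwS⟩, ⟨⟨t.length, s2.length⟩, mem_antidiagonal.mpr hlen'⟩, ⟨t, ⟨rfl, hvt⟩⟩,
          ⟨s2, ⟨rfl, ?_⟩⟩⟩, ?_⟩
        · intro y hy
          apply hgood
          rw [Walk.support_cons]
          refine List.mem_cons_of_mem _ ?_
          rw [Walk.mem_support_append_iff]
          exact Or.inr hy
        · apply Subtype.ext
          rfl
  have hcardT : Nat.card T =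
      ∑ w ∈ S, ∑ ij ∈ antidiagonal n,
        Nat.card {t : G.Walk w w // t.length = ij.1 ∧ v ∉ t.support} *
        Nat.card {d : G.Walk v v // d.length = ij.2 ∧ ∀ y ∈ d.support, ¬ F y} := by
    rw [card_sigma']
    rw [← Finset.sum_coe_sort S]
    refine Finset.sum_congr rfl ?_
    intro w _
    rw [card_sigma']
    rw [← Finset.sum_coe_sort (antidiagonal n)]
    refine Finset.sum_congr rfl ?_
    intro ij _
    exact Nat.card_prod _ _
  rw [← Nat.card_eq_of_bijective Φ hbij, hcardT]

noncomputable def WA (G : SimpleGraph V) (w u : V) (i : ℕ) : ℕ :=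
  Nat.card {t : G.Walk w w // t.length = i ∧ u ∉ t.support}

noncomputable def WB (G : SimpleGraph V) (v : V) (i : ℕ) : ℕ :=
  Nat.card {p : G.Walk v v // p.length = i}

lemma card_avoid (w u : V) (i : ℕ) :
    Nat.card {t : G.Walk w w // t.length = i ∧ ∀ y ∈ t.support, ¬ (y = u)} = WA G w u i := by
  apply Nat.card_congr
  apply Equiv.subtypeEquivRight
  intro p
  constructor
  · rintro ⟨h1, h2⟩; exact ⟨h1, fun hu => h2 u hu rfl⟩
  · rintro ⟨h1, h2⟩; exact ⟨h1, fun y hy hyu => h2 (hyu ▸ hy)⟩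

lemma card_triv (v : V) (i : ℕ) :
    Nat.card {p : G.Walk v v // p.length = i ∧ ∀ y ∈ p.support, ¬ False} = WB G v i := by
  apply Nat.card_congr
  apply Equiv.subtypeEquivRight
  intro p
  simp

lemma RA (hacyc : G.IsAcyclic) {v u : V} (hadj : G.Adj v u) (n : ℕ) :
    WA G v u (n + 2) = ∑ w ∈ (G.neighborFinset v).erase u, ∑ ij ∈ antidiagonal n,
      WA G w v ij.1 * WA G v u ij.2 := by
  have h := card_rec hacyc v (fun y => y = u) hadj.ne (by
    intro w hvw hFw x t hvts y hyt hyu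
    subst hyu
    exact tree_sep hacyc hvw hadj hFw hvts hyt) n
  rw [card_avoid] at h
  rw [h]
  have hfe : (G.neighborFinset v).filter (fun w => ¬ (w = u)) = (G.neighborFinset v).erase u := by
    ext x
    simp [mem_filter, Finset.mem_erase, and_comm]
  rw [hfe]
  refine Finset.sum_congr rfl fun w _ => Finset.sum_congr rfl fun ij _ => ?_
  rw [card_avoid]
  rfl

lemma RB (hacyc : G.IsAcyclic) (v : V) (n : ℕ) :
    WB G v (n + 2) = ∑ w ∈ G.neighborFinset v, ∑ ij ∈ antidiagonal n,
      WA G w v ij.1 * WB G v ij.2 := by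
  have h := card_rec hacyc v (fun _ => False) (fun h => h) (fun w _ _ x t _ y _ hF => hF) n
  rw [card_triv] at h
  rw [h]
  rw [Finset.filter_true_of_mem (fun _ _ => not_false)]
  refine Finset.sum_congr rfl fun w _ => Finset.sum_congr rfl fun ij _ => ?_
  rw [card_triv]
  rfl

variable {m : ℕ}

lemma WA_eq_aseq (hacyc : G.IsAcyclic) (hdeg : ∀ v, G.degree v = m) :
    ∀ (n : ℕ) {v u : V}, G.Adj v u → WA G v u n = aseq m n := by
  intro n
  induction n using Nat.strong_induction_on with
  | _ n ih =>
    obtain _ | _ | k := n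
    · intro v u hadj
      rw [aseq_zero]
      rw [show WA G v u 0 = Nat.card {t : G.Walk v v // t.length = 0 ∧ u ∉ t.support} from rfl]
      rw [Nat.card_eq_one_iff_unique]
      constructor
      · constructor
        rintro ⟨t, ht⟩ ⟨t', ht'⟩
        apply Subtype.ext
        have h1 := Walk.length_eq_zero_iff.mp ht.1
        have h2 := Walk.length_eq_zero_iff.mp ht'.1
        show t = t'
        rw [Walk.nil_iff_eq_nil.mp h1, Walk.nil_iff_eq_nil.mp h2]
      · exact ⟨⟨Walk.nil, rfl, by simp [hadj.ne']⟩⟩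
    · intro v u hadj
      rw [aseq_one]
      haveI : IsEmpty {t : G.Walk v v // t.length = 1 ∧ u ∉ t.support} := by
        constructor
        rintro ⟨t, ht, _⟩
        cases t with
        | nil => simp at ht
        | @cons a b c h q =>
          rw [Walk.length_cons] at ht
          have hbv : b = v := Walk.eq_of_length_eq_zero (show q.length = 0 by omega)
          subst hbv
          exact G.irrefl h
      exact Nat.card_of_isEmpty
    · intro v u hadj
      show WA G v u (k + 2) = aseq m (k + 2)
      rw [RA hacyc hadj k]
      have hstep : ∀ w ∈ (G.neighborFinset v).erase u,
          ∑ ij ∈ antidiagonal k, WA G w v ij.1 * WA G v u ij.2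
          = ∑ ij ∈ antidiagonal k, aseq m ij.1 * aseq m ij.2 := by
        intro w hw
        have hadjw : G.Adj w v :=
          ((mem_neighborFinset _ _ _).mp (Finset.mem_of_mem_erase hw)).symm
        refine Finset.sum_congr rfl fun ij hij => ?_
        have hmem := mem_antidiagonal.mp hij
        rw [ih ij.1 (by omega) hadjw, ih ij.2 (by omega) hadj]
      rw [Finset.sum_congr rfl hstep, Finset.sum_const,
        Finset.card_erase_of_mem ((mem_neighborFinset _ _ _).mpr hadj),
        card_neighborFinset_eq_degree, hdeg, smul_eq_mul, aseq_rec]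

lemma WB_zero (v : V) : WB G v 0 = 1 := by
  rw [WB, Nat.card_eq_one_iff_unique]
  constructor
  · constructor
    rintro ⟨t, ht⟩ ⟨t', ht'⟩
    apply Subtype.ext
    have h1 := Walk.length_eq_zero_iff.mp ht
    have h2 := Walk.length_eq_zero_iff.mp ht'
    show t = t'
    rw [Walk.nil_iff_eq_nil.mp h1, Walk.nil_iff_eq_nil.mp h2]
  · exact ⟨⟨Walk.nil, rfl⟩⟩

lemma WB_one (v : V) : WB G v 1 = 0 := by
  rw [WB]
  haveI : IsEmpty {t : G.Walk v v // t.length = 1} := by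
    constructor
    rintro ⟨t, ht⟩
    cases t with
    | nil => simp at ht
    | @cons a b c h q =>
      rw [Walk.length_cons] at ht
      have hbv : b = v := Walk.eq_of_length_eq_zero (show q.length = 0 by omega)
      subst hbv
      exact G.irrefl h
  exact Nat.card_of_isEmpty

lemma WB_rec (hacyc : G.IsAcyclic) (hdeg : ∀ v, G.degree v = m) (v : V) (n : ℕ) :
    WB G v (n + 2) = m * ∑ ij ∈ antidiagonal n, aseq m ij.1 * WB G v ij.2 := by
  rw [RB hacyc v n]
  have hstep : ∀ w ∈ G.neighborFinset v,
      ∑ ij ∈ antidiagonal n, WA G w v ij.1 * WB G v ij.2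
      = ∑ ij ∈ antidiagonal n, aseq m ij.1 * WB G v ij.2 := by
    intro w hw
    have hadjw : G.Adj w v := ((mem_neighborFinset _ _ _).mp hw).symm
    refine Finset.sum_congr rfl fun ij hij => ?_
    rw [WA_eq_aseq hacyc hdeg ij.1 hadjw]
  rw [Finset.sum_congr rfl hstep, Finset.sum_const,
    card_neighborFinset_eq_degree, hdeg, smul_eq_mul]

/-- encode a walk by the list of neighbor indices it takes -/
def enc (ε : ∀ x : V, (G.neighborSet x) ≃ Fin m) : ∀ {a b : V}, G.Walk a b → List (Fin m)
  | _, _, Walk.nil => []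
  | _, _, Walk.cons h q => (ε _ ⟨_, h⟩) :: enc ε q

lemma enc_length (ε : ∀ x : V, (G.neighborSet x) ≃ Fin m) :
    ∀ {a b : V} (p : G.Walk a b), (enc ε p).length = p.length := by
  intro a b p
  induction p with
  | nil => simp [enc]
  | cons h q ih => simp [enc, ih]

lemma enc_inj (ε : ∀ x : V, (G.neighborSet x) ≃ Fin m) :
    ∀ {a b : V} (p q : G.Walk a b), enc ε p = enc ε q → p = q := by
  intro a b p
  induction p with
  | nil =>
    intro q h
    cases q with
    | nil => rfl
    | cons h' q' => simp [enc] at h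
  | @cons a c b h p ih =>
    intro q hq
    cases q with
    | nil => simp [enc] at hq
    | @cons a' c' b' h' q' =>
      simp only [enc, List.cons.injEq] at hq
      obtain ⟨h1, h2⟩ := hq
      have h3 := (ε a).injective h1
      have hcc : c = c' := congrArg Subtype.val h3
      subst hcc
      rw [ih q' h2]

lemma card_walk_le (hdeg : ∀ v, G.degree v = m) (v u : V) (n : ℕ) :
    Nat.card {p : G.Walk v u // p.length = n} ≤ m ^ n := by
  have ε : ∀ x : V, (G.neighborSet x) ≃ Fin m := fun x =>
    Fintype.equivFinOfCardEq (by rw [G.card_neighborSet_eq_degree, hdeg])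
  set J : {p : G.Walk v u // p.length = n} → (Fin n → Fin m) := fun p i =>
    (enc ε p.1).get ⟨i.1, by rw [enc_length, p.2]; exact i.2⟩ with hJ
  have hJinj : Function.Injective J := by
    intro p q h
    apply Subtype.ext
    apply enc_inj ε
    apply List.ext_get (by rw [enc_length, enc_length, p.2, q.2])
    intro i hi1 hi2
    have h2 := congrFun h ⟨i, by rw [enc_length, p.2] at hi1; exact hi1⟩
    rw [hJ] at h2
    exact h2
  calc Nat.card {p : G.Walk v u // p.length = n}
      ≤ Nat.card (Fin n → Fin m) := Nat.card_le_card_of_injective J hJinj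
    _ = m ^ n := by simp [Nat.card_eq_fintype_card]

lemma WA_le_pow (hdeg : ∀ v, G.degree v = m) (v u : V) (n : ℕ) : WA G v u n ≤ m ^ n := by
  refine le_trans ?_ (card_walk_le hdeg v v n)
  apply Nat.card_le_card_of_injective
    (f := fun t : {t : G.Walk v v // t.length = n ∧ u ∉ t.support} =>
      (⟨t.1, t.2.1⟩ : {p : G.Walk v v // p.length = n}))
  intro t t' h
  apply Subtype.ext
  have := congrArg Subtype.val h
  simpa using this

lemma WB_le_pow (hdeg : ∀ v, G.degree v = m) (v : V) (n : ℕ) : WB G v n ≤ m ^ n :=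
  card_walk_le hdeg v v n

lemma aseq_le_pow (hacyc : G.IsAcyclic) (hdeg : ∀ v, G.degree v = m)
    {v u : V} (hadj : G.Adj v u) (n : ℕ) : aseq m n ≤ m ^ n := by
  rw [← WA_eq_aseq hacyc hdeg n hadj]
  exact WA_le_pow hdeg v u n

lemma WB_odd (hacyc : G.IsAcyclic) (hdeg : ∀ v, G.degree v = m) (v : V) :
    ∀ n, ¬ 2 ∣ n → WB G v n = 0 := by
  intro n
  induction n using Nat.strong_induction_on with
  | _ n ih =>
    obtain _ | _ | k := n
    · intro h; exact absurd ⟨0, rfl⟩ h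
    · intro _; exact WB_one v
    · intro hodd
      show WB G v (k + 2) = 0
      rw [WB_rec hacyc hdeg v k]
      have hz : ∑ ij ∈ antidiagonal k, aseq m ij.1 * WB G v ij.2 = 0 := by
        refine Finset.sum_eq_zero fun ij hij => ?_
        have hmem := mem_antidiagonal.mp hij
        by_cases h1 : 2 ∣ ij.1
        · rw [show WB G v ij.2 = 0 from ih ij.2 (by omega) (by omega), mul_zero]
        · rw [aseq_odd m h1, zero_mul]
      rw [hz, mul_zero]

end Counting

end StmtAux

open scoped InnerProductSpace
open Complex Real

/-- **Closed form of the return generating function on the `m`-regular tree:** for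
`|z| < 1/m`, `B(z) = ∑ B_k z^k` converges absolutely and
`B(z) = (-(m-2) + m √(1 - 4(m-1)z²)) / (2(1 - m²z²))`. -/
theorem stmt_14
    (m : ℕ) (hm : 3 ≤ m)
    (V : Type) (G : SimpleGraph V)
    [∀ v : V, Fintype (G.neighborSet v)]
    (hconn : G.Connected) (hacyc : G.IsAcyclic)
    (hdeg : ∀ v : V, G.degree v = m)
    (e : V)
    (B : ℕ → ℕ)
    (hB : ∀ k : ℕ, B k = Nat.card {p : G.Walk e e // p.length = k})
    (z : ℝ) (hz : |z| < 1 / m) :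
    Summable (fun k : ℕ => |(B k : ℝ) * z ^ k|) ∧
    (∑' k : ℕ, (B k : ℝ) * z ^ k) =
      (-((m : ℝ) - 2) + (m : ℝ) * Real.sqrt (1 - 4 * ((m : ℝ) - 1) * z ^ 2)) /
        (2 * (1 - (m : ℝ) ^ 2 * z ^ 2)) := by
  classical
  have hBW : ∀ k, B k = StmtAux.WB G e k := fun k => hB k
  have hm3 : (3 : ℝ) ≤ (m : ℝ) := by exact_mod_cast hm
  have hm0 : (0 : ℝ) < (m : ℝ) := by linarith
  have hz1 : (m : ℝ) * |z| < 1 := by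
    have h := (lt_div_iff₀ hm0).mp hz
    calc (m : ℝ) * |z| = |z| * m := by ring
      _ < 1 := h
  set r : ℝ := (m : ℝ) * |z| with hr
  have hr0 : (0 : ℝ) ≤ r := by positivity
  -- a neighbor of e
  have hnbr : ∃ u, G.Adj e u := by
    have hpos : 0 < G.degree e := by rw [hdeg e]; omega
    rw [← SimpleGraph.card_neighborFinset_eq_degree] at hpos
    obtain ⟨u, hu⟩ := Finset.card_pos.mp hpos
    exact ⟨u, (SimpleGraph.mem_neighborFinset _ _ _).mp hu⟩
  obtain ⟨u0, hu0⟩ := hnbr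
  -- sequences
  set fa : ℕ → ℝ := fun k => (StmtAux.aseq m k : ℝ) * z ^ k with hfa
  set fB : ℕ → ℝ := fun k => (B k : ℝ) * z ^ k with hfB
  -- term bounds
  have hBle : ∀ k, (B k : ℝ) ≤ (m : ℝ) ^ k := by
    intro k
    rw [hBW k]
    exact_mod_cast StmtAux.WB_le_pow hdeg e k
  have hale : ∀ k, ((StmtAux.aseq m k : ℕ) : ℝ) ≤ (m : ℝ) ^ k := by
    intro k
    exact_mod_cast StmtAux.aseq_le_pow hacyc hdeg hu0 k
  have hfB_abs : ∀ k, |fB k| ≤ r ^ k := by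
    intro k
    show |(B k : ℝ) * z ^ k| ≤ r ^ k
    rw [abs_mul, _root_.abs_pow, Nat.abs_cast, hr, mul_pow]
    exact mul_le_mul_of_nonneg_right (hBle k) (by positivity)
  have hfa_abs : ∀ k, |fa k| ≤ r ^ k := by
    intro k
    show |(StmtAux.aseq m k : ℝ) * z ^ k| ≤ r ^ k
    rw [abs_mul, _root_.abs_pow, Nat.abs_cast, hr, mul_pow]
    exact mul_le_mul_of_nonneg_right (hale k) (by positivity)
  have hgeom : Summable fun k : ℕ => r ^ k := summable_geometric_of_lt_one hr0 hz1
  have hSB_abs : Summable (fun k : ℕ => |fB k|) :=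
    Summable.of_nonneg_of_le (fun k => abs_nonneg _) hfB_abs hgeom
  have hSa_abs : Summable (fun k : ℕ => |fa k|) :=
    Summable.of_nonneg_of_le (fun k => abs_nonneg _) hfa_abs hgeom
  have hSB : Summable fB := summable_abs_iff.mp hSB_abs
  have hSa : Summable fa := summable_abs_iff.mp hSa_abs
  have hSB_norm : Summable (fun k : ℕ => ‖fB k‖) := by
    simpa [Real.norm_eq_abs] using hSB_abs
  have hSa_norm : Summable (fun k : ℕ => ‖fa k‖) := by
    simpa [Real.norm_eq_abs] using hSa_abs
  refine ⟨hSB_abs, ?_⟩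
  set A : ℝ := ∑' k, fa k with hA
  set Bt : ℝ := ∑' k, fB k with hBt
  -- Cauchy products
  have haa := tsum_mul_tsum_eq_tsum_sum_antidiagonal_of_summable_norm hSa_norm hSa_norm
  have hab := tsum_mul_tsum_eq_tsum_sum_antidiagonal_of_summable_norm hSa_norm hSB_norm
  -- shift lemma
  have hshift : ∀ (f : ℕ → ℝ), Summable f → ∑' n, f n = f 0 + f 1 + ∑' n, f (n + 2) := by
    intro f hf
    rw [Summable.tsum_eq_zero_add hf, Summable.tsum_eq_zero_add ((summable_nat_add_iff 1).mpr hf)]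
    exact (add_assoc _ _ _).symm
  -- base values
  have hfa0 : fa 0 = 1 := by show (StmtAux.aseq m 0 : ℝ) * z ^ 0 = 1; simp [StmtAux.aseq_zero]
  have hfa1 : fa 1 = 0 := by show (StmtAux.aseq m 1 : ℝ) * z ^ 1 = 0; simp [StmtAux.aseq_one]
  have hB0 : B 0 = 1 := by rw [hBW]; exact StmtAux.WB_zero e
  have hB1 : B 1 = 0 := by rw [hBW]; exact StmtAux.WB_one e
  have hfB0 : fB 0 = 1 := by show (B 0 : ℝ) * z ^ 0 = 1; simp [hB0]
  have hfB1 : fB 1 = 0 := by show (B 1 : ℝ) * z ^ 1 = 0; simp [hB1]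
  -- recurrences, real-cast
  have hfa2 : ∀ n, fa (n + 2) =
      ((m : ℝ) - 1) * z ^ 2 * ∑ ij ∈ Finset.HasAntidiagonal.antidiagonal n, fa ij.1 * fa ij.2 := by
    intro n
    have h := congrArg (Nat.cast (R := ℝ)) (StmtAux.aseq_rec m n)
    push_cast [Nat.cast_sub (show 1 ≤ m by omega)] at h
    have hsum : (∑ ij ∈ Finset.HasAntidiagonal.antidiagonal n,
        ((StmtAux.aseq m ij.1 : ℝ) * (StmtAux.aseq m ij.2 : ℝ))) * z ^ (n + 2)
        = z ^ 2 * ∑ ij ∈ Finset.HasAntidiagonal.antidiagonal n, fa ij.1 * fa ij.2 := by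
      rw [Finset.sum_mul, Finset.mul_sum]
      refine Finset.sum_congr rfl fun ij hij => ?_
      have hmem := Finset.HasAntidiagonal.mem_antidiagonal.mp hij
      show _ = z ^ 2 * ((StmtAux.aseq m ij.1 : ℝ) * z ^ ij.1 *
        ((StmtAux.aseq m ij.2 : ℝ) * z ^ ij.2))
      rw [show n + 2 = ij.1 + (ij.2 + 2) from by omega, pow_add, pow_add]
      ring
    calc fa (n + 2) = (StmtAux.aseq m (n + 2) : ℝ) * z ^ (n + 2) := rfl
      _ = ((m : ℝ) - 1) * ((∑ ij ∈ Finset.HasAntidiagonal.antidiagonal n,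
            ((StmtAux.aseq m ij.1 : ℝ) * (StmtAux.aseq m ij.2 : ℝ))) * z ^ (n + 2)) := by
          rw [h]; ring
      _ = ((m : ℝ) - 1) * (z ^ 2 * ∑ ij ∈ Finset.HasAntidiagonal.antidiagonal n, fa ij.1 * fa ij.2) := by
          rw [hsum]
      _ = _ := by ring
  have hfB2 : ∀ n, fB (n + 2) =
      (m : ℝ) * z ^ 2 * ∑ ij ∈ Finset.HasAntidiagonal.antidiagonal n, fa ij.1 * fB ij.2 := by
    intro n
    have h0 : B (n + 2) = m * ∑ ij ∈ Finset.HasAntidiagonal.antidiagonal n, StmtAux.aseq m ij.1 * B ij.2 := by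
      rw [hBW]
      rw [StmtAux.WB_rec hacyc hdeg e n]
      congr 1
      exact Finset.sum_congr rfl fun ij _ => by rw [hBW]
    have h := congrArg (Nat.cast (R := ℝ)) h0
    push_cast at h
    have hsum : (∑ ij ∈ Finset.HasAntidiagonal.antidiagonal n,
        ((StmtAux.aseq m ij.1 : ℝ) * (B ij.2 : ℝ))) * z ^ (n + 2)
        = z ^ 2 * ∑ ij ∈ Finset.HasAntidiagonal.antidiagonal n, fa ij.1 * fB ij.2 := by
      rw [Finset.sum_mul, Finset.mul_sum]
      refine Finset.sum_congr rfl fun ij hij => ?_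
      have hmem := Finset.HasAntidiagonal.mem_antidiagonal.mp hij
      show _ = z ^ 2 * ((StmtAux.aseq m ij.1 : ℝ) * z ^ ij.1 * ((B ij.2 : ℝ) * z ^ ij.2))
      rw [show n + 2 = ij.1 + (ij.2 + 2) from by omega, pow_add, pow_add]
      ring
    calc fB (n + 2) = (B (n + 2) : ℝ) * z ^ (n + 2) := rfl
      _ = (m : ℝ) * ((∑ ij ∈ Finset.HasAntidiagonal.antidiagonal n,
            ((StmtAux.aseq m ij.1 : ℝ) * (B ij.2 : ℝ))) * z ^ (n + 2)) := by
          rw [h]; ring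
      _ = (m : ℝ) * (z ^ 2 * ∑ ij ∈ Finset.HasAntidiagonal.antidiagonal n, fa ij.1 * fB ij.2) := by rw [hsum]
      _ = _ := by ring
  -- functional equations
  have hE1 : A = 1 + ((m : ℝ) - 1) * z ^ 2 * (A * A) := by
    calc A = fa 0 + fa 1 + ∑' n, fa (n + 2) := hshift fa hSa
      _ = 1 + 0 + ∑' n, ((m : ℝ) - 1) * z ^ 2 *
            ∑ ij ∈ Finset.HasAntidiagonal.antidiagonal n, fa ij.1 * fa ij.2 := by
          rw [hfa0, hfa1, tsum_congr hfa2]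
      _ = 1 + ((m : ℝ) - 1) * z ^ 2 * (A * A) := by
          rw [tsum_mul_left, ← haa]; ring
  have hE2 : Bt = 1 + (m : ℝ) * z ^ 2 * (A * Bt) := by
    calc Bt = fB 0 + fB 1 + ∑' n, fB (n + 2) := hshift fB hSB
      _ = 1 + 0 + ∑' n, (m : ℝ) * z ^ 2 *
            ∑ ij ∈ Finset.HasAntidiagonal.antidiagonal n, fa ij.1 * fB ij.2 := by
          rw [hfB0, hfB1, tsum_congr hfB2]
      _ = 1 + (m : ℝ) * z ^ 2 * (A * Bt) := by
          rw [tsum_mul_left, ← hab]; ring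
  -- positivity of Bt
  have hBodd : ∀ k, ¬ 2 ∣ k → B k = 0 := by
    intro k hk
    rw [hBW]
    exact StmtAux.WB_odd hacyc hdeg e k hk
  have hfBnn : ∀ k, 0 ≤ fB k := by
    intro k
    by_cases hk : 2 ∣ k
    · obtain ⟨j, rfl⟩ := hk
      show (0:ℝ) ≤ (B (2 * j) : ℝ) * z ^ (2 * j)
      rw [pow_mul]
      positivity
    · show (0:ℝ) ≤ (B k : ℝ) * z ^ k
      rw [hBodd k hk]
      simp
  have hBt1 : (1 : ℝ) ≤ Bt := by
    have h0 : fB 0 ≤ Bt := Summable.le_tsum hSB 0 (fun j _ => hfBnn j)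
    rw [hfB0] at h0
    exact h0
  -- algebra endgame
  set den : ℝ := 1 - (m : ℝ) ^ 2 * z ^ 2 with hden_def
  have hden : 0 < den := by
    have h1 : r ^ 2 < 1 := by nlinarith
    have h2 : (m : ℝ) ^ 2 * z ^ 2 = r ^ 2 := by rw [hr, mul_pow, _root_.sq_abs]
    rw [hden_def]
    nlinarith
  set D : ℝ := 1 - 4 * ((m : ℝ) - 1) * z ^ 2 with hD_def
  have hD : 0 < D := by
    have hDden : D = den + ((m : ℝ) - 2) ^ 2 * z ^ 2 := by rw [hD_def, hden_def]; ring
    nlinarith [sq_nonneg (((m : ℝ) - 2) * z)]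
  set s : ℝ := Real.sqrt D with hs_def
  have hs2 : s ^ 2 = D := Real.sq_sqrt hD.le
  have hs0 : 0 < s := Real.sqrt_pos.mpr hD
  have hquad : den * Bt ^ 2 + ((m : ℝ) - 2) * Bt - ((m : ℝ) - 1) = 0 := by
    rw [hden_def]
    linear_combination ((m : ℝ) ^ 2 * z ^ 2 * Bt ^ 2) * hE1 +
      (((m : ℝ) - 1) * (1 + Bt - (m : ℝ) * z ^ 2 * (A * Bt)) - ((m : ℝ) - 2) * Bt) * hE2
  have hkey : (2 * den * Bt - (-((m : ℝ) - 2) + (m : ℝ) * s)) *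
      (2 * den * Bt - (-((m : ℝ) - 2) - (m : ℝ) * s)) = 0 := by
    rw [hden_def] at hquad ⊢
    rw [hD_def] at hs2
    linear_combination (4 * (1 - (m : ℝ) ^ 2 * z ^ 2)) * hquad + (-(m : ℝ) ^ 2) * hs2
  rcases mul_eq_zero.mp hkey with hk1 | hk2
  · show Bt = (-((m : ℝ) - 2) + (m : ℝ) * s) / (2 * den)
    rw [eq_div_iff (by positivity)]
    linarith
  · exfalso
    nlinarith [hden, hBt1, hs0, hm3]
end

section
/- For every real z with 0 < |z| < 1/m, the series A(z) = Σ_{k=0}^{∞} A_k z^k converges absolutely and A(z) = ( 1 − √(1 − 4(m−1) z²) ) / ( 2 (m−1) z² ), where √ denotes the nonnegative real square root. -/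
open scoped InnerProductSpace
open Complex Real

/-! ### Auxiliary: the sequence `fA d k = catalan (k/2) * d^(k/2)` for even `k`, `0` for odd. -/

private def fA (d : ℕ) (k : ℕ) : ℕ := if Even k then catalan (k / 2) * d ^ (k / 2) else 0

private lemma fA_even (d n : ℕ) : fA d (2 * n) = catalan n * d ^ n := by
  simp [fA, Nat.mul_div_cancel_left _ (by norm_num : 0 < 2), even_two_mul]

private lemma fA_odd {d k : ℕ} (h : ¬ Even k) : fA d k = 0 := if_neg h

private lemma fA_zero (d : ℕ) : fA d 0 = 1 := by simpa using fA_even d 0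

private lemma fA_one (d : ℕ) : fA d 1 = 0 := fA_odd (by simp)

private lemma sum_range_even_vanish {M : Type*} [AddCommMonoid M] (g : ℕ → M) (n : ℕ)
    (h : ∀ a, ¬ Even a → g a = 0) :
    ∑ a ∈ Finset.range (2 * n + 1), g a = ∑ i ∈ Finset.range (n + 1), g (2 * i) := by
  induction n with
  | zero => simp
  | succ n ih =>
    have h1 : 2 * (n + 1) + 1 = (2 * n + 1) + 1 + 1 := by ring
    rw [h1, Finset.sum_range_succ, Finset.sum_range_succ, ih,
      h (2 * n + 1) (by simp [Nat.even_add_one, parity_simps]), add_zero,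
      show 2 * n + 1 + 1 = 2 * (n + 1) by ring,
      Finset.sum_range_succ (fun i => g (2 * i)) (n + 1)]

private lemma fA_rec (d k : ℕ) :
    fA d (k + 2) = d * ∑ a ∈ Finset.range (k + 1), fA d a * fA d (k - a) := by
  rcases Nat.even_or_odd k with ⟨n, hn⟩ | hk
  · have hk2 : k = 2 * n := by omega
    subst hk2
    have hvan : ∀ a, ¬ Even a → fA d a * fA d (2 * n - a) = 0 := fun a ha => by
      rw [fA_odd ha, zero_mul]
    rw [show 2 * n + 2 = 2 * (n + 1) by ring, fA_even,
      sum_range_even_vanish (fun a => fA d a * fA d (2 * n - a)) n hvan]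
    have hterm : ∀ i ∈ Finset.range (n + 1),
        fA d (2 * i) * fA d (2 * n - 2 * i) = (catalan i * catalan (n - i)) * d ^ n := by
      intro i hi
      have hi' : i ≤ n := by simpa using Nat.lt_succ_iff.mp (Finset.mem_range.mp hi)
      rw [show 2 * n - 2 * i = 2 * (n - i) by omega, fA_even, fA_even,
        mul_mul_mul_comm, ← pow_add, show i + (n - i) = n by omega]
    rw [Finset.sum_congr rfl hterm, ← Finset.sum_mul, catalan_succ, ← Finset.sum_range
      (fun i => catalan i * catalan (n - i))]
    ring
  · have h2 : ¬ Even (k + 2) := by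
      have : Odd (k + 2) := by rcases hk with ⟨n, hn⟩; exact ⟨n + 1, by omega⟩
      exact Nat.not_even_iff_odd.mpr this
    have hz : ∀ a ∈ Finset.range (k + 1), fA d a * fA d (k - a) = 0 := by
      intro a ha
      have ha' : a ≤ k := by have := Finset.mem_range.mp ha; omega
      rcases Nat.even_or_odd a with he | ho
      · have hodd : ¬ Even (k - a) := by
          rw [Nat.even_sub ha']
          simp [Nat.not_even_iff_odd.mpr hk, he]
        rw [fA_odd hodd, mul_zero]
      · rw [fA_odd (Nat.not_even_iff_odd.mpr ho), zero_mul]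
    rw [fA_odd h2, Finset.sum_eq_zero hz, mul_zero]

/-! ### Auxiliary: Catalan number estimates and the Catalan generating function. -/

private lemma catalan_le_four_pow (n : ℕ) : catalan n ≤ 4 ^ n := by
  calc catalan n ≤ n.centralBinom := by
        rw [catalan_eq_centralBinom_div]; exact Nat.div_le_self _ _
    _ ≤ 4 ^ n := by
        rw [Nat.centralBinom_eq_two_mul_choose]
        calc (2 * n).choose n ≤ (2 * n + 1).choose n :=
              Nat.choose_le_choose n (Nat.le_succ _)
          _ ≤ 4 ^ n := Nat.choose_middle_le_pow n

private lemma catalan_partial (N : ℕ) :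
    ∑ i ∈ Finset.range N, (catalan i : ℝ) / 4 ^ i = 2 - 2 * (Nat.centralBinom N) / 4 ^ N := by
  induction N with
  | zero => simp [Nat.centralBinom_zero]
  | succ N ih =>
    rw [Finset.sum_range_succ, ih]
    have h1 : ((N : ℝ) + 1) * catalan N = Nat.centralBinom N := by
      exact_mod_cast congrArg (Nat.cast : ℕ → ℝ) (succ_mul_catalan_eq_centralBinom N)
    have h2 : ((N : ℝ) + 1) * Nat.centralBinom (N + 1) = 2 * (2 * N + 1) * Nat.centralBinom N := by
      exact_mod_cast congrArg (Nat.cast : ℕ → ℝ) (Nat.succ_mul_centralBinom_succ N)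
    have h4 : (4 : ℝ) ^ N ≠ 0 := by positivity
    have h5 : ((N : ℝ) + 1) ≠ 0 := by positivity
    have key : ((N : ℝ) + 1) * (2 - 2 * (Nat.centralBinom N) / 4 ^ N + (catalan N : ℝ) / 4 ^ N)
        = ((N : ℝ) + 1) * (2 - 2 * (Nat.centralBinom (N + 1)) / 4 ^ (N + 1)) := by
      linear_combination ((4 : ℝ) ^ N)⁻¹ * h1 + ((4 : ℝ) ^ N)⁻¹ / 2 * h2
    exact mul_left_cancel₀ h5 key

private lemma catalan_gf {x : ℝ} (hx0 : 0 < x) (hx : x < 1 / 4) :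
    Summable (fun n : ℕ => (catalan n : ℝ) * x ^ n) ∧
      (∑' n : ℕ, (catalan n : ℝ) * x ^ n)
        = (1 - Real.sqrt (1 - 4 * x)) / (2 * x) := by
  have hxnn : 0 ≤ x := hx0.le
  have hterm_nonneg : ∀ n : ℕ, 0 ≤ (catalan n : ℝ) * x ^ n := fun n => by positivity
  have hsum : Summable (fun n : ℕ => (catalan n : ℝ) * x ^ n) := by
    have hg : Summable (fun n : ℕ => (4 * x) ^ n) := by
      apply summable_geometric_of_lt_one (by positivity)
      linarith
    refine Summable.of_nonneg_of_le hterm_nonneg (fun n => ?_) hg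
    rw [mul_pow]
    apply mul_le_mul_of_nonneg_right _ (pow_nonneg hxnn n)
    calc (catalan n : ℝ) ≤ ((4 ^ n : ℕ) : ℝ) := by exact_mod_cast catalan_le_four_pow n
      _ = 4 ^ n := by push_cast; ring
  refine ⟨hsum, ?_⟩
  set S : ℝ := ∑' n : ℕ, (catalan n : ℝ) * x ^ n with hS
  have hS0 : 0 ≤ S := tsum_nonneg hterm_nonneg
  -- S ≤ 2
  have hS2 : S ≤ 2 := by
    apply Real.tsum_le_of_sum_range_le hterm_nonneg
    intro n
    calc ∑ i ∈ Finset.range n, (catalan i : ℝ) * x ^ i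
        ≤ ∑ i ∈ Finset.range n, (catalan i : ℝ) / 4 ^ i := by
          apply Finset.sum_le_sum
          intro i _
          rw [div_eq_mul_inv, ← inv_pow]
          apply mul_le_mul_of_nonneg_left _ (by positivity)
          apply pow_le_pow_left₀ hxnn
          rw [← one_div]; linarith
      _ = 2 - 2 * (Nat.centralBinom n) / 4 ^ n := catalan_partial n
      _ ≤ 2 := by
          have : (0:ℝ) ≤ 2 * (Nat.centralBinom n) / 4 ^ n := by positivity
          linarith
  -- functional equation S = 1 + x * S^2
  have habs : Summable (fun n : ℕ => ‖(catalan n : ℝ) * x ^ n‖) := by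
    have : (fun n : ℕ => ‖(catalan n : ℝ) * x ^ n‖) = fun n : ℕ => (catalan n : ℝ) * x ^ n :=
      funext fun n => _root_.abs_of_nonneg (hterm_nonneg n)
    rw [this]
    exact hsum
  have hcauchy := tsum_mul_tsum_eq_tsum_sum_antidiagonal_of_summable_norm habs habs
  have hinner : ∀ n : ℕ, (∑ kl ∈ Finset.HasAntidiagonal.antidiagonal n,
      ((catalan kl.1 : ℝ) * x ^ kl.1) * ((catalan kl.2 : ℝ) * x ^ kl.2))
      = (catalan (n + 1) : ℝ) * x ^ n := by
    intro n
    have : (catalan (n+1) : ℝ) = ∑ kl ∈ Finset.HasAntidiagonal.antidiagonal n, (catalan kl.1 : ℝ) * catalan kl.2 := by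
      rw [catalan_succ']
      push_cast
      rfl
    rw [this, Finset.sum_mul]
    apply Finset.sum_congr rfl
    rintro ⟨i, j⟩ hij
    have hij' : i + j = n := Finset.HasAntidiagonal.mem_antidiagonal.mp hij
    rw [← hij', pow_add]
    ring
  have hTsum : Summable (fun n : ℕ => (catalan (n + 1) : ℝ) * x ^ (n + 1)) :=
    hsum.comp_injective (add_left_injective 1)
  have hshift : S = 1 + ∑' n : ℕ, (catalan (n + 1) : ℝ) * x ^ (n + 1) := by
    rw [hS, Summable.tsum_eq_zero_add hsum]
    simp [catalan_zero]
  have hfe : S = 1 + x * S ^ 2 := by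
    have e1 : S * S = ∑' n : ℕ, (catalan (n + 1) : ℝ) * x ^ n := by
      rw [hS, hcauchy]
      exact tsum_congr hinner
    have e2 : x * (S * S) = S - 1 := by
      rw [e1, ← tsum_mul_left]
      have e3 : ∀ n : ℕ, x * ((catalan (n + 1) : ℝ) * x ^ n)
          = (catalan (n + 1) : ℝ) * x ^ (n + 1) := by
        intro n
        rw [pow_succ]
        ring
      rw [tsum_congr e3, hshift]
      ring
    rw [sq]
    linarith [e2]
  -- solve the quadratic
  have h2xS : 2 * x * S ≤ 4 * x := by nlinarith
  have h1m : 0 ≤ 1 - 2 * x * S := by linarith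
  have hkey : (1 - 2 * x * S) ^ 2 = 1 - 4 * x := by nlinarith [hfe]
  have hsqrt : Real.sqrt (1 - 4 * x) = 1 - 2 * x * S := by
    rw [← hkey, Real.sqrt_sq h1m]
  rw [hsqrt]
  have hx' : (2 : ℝ) * x ≠ 0 := by positivity
  field_simp
  ring

section Graph

open SimpleGraph

variable {V : Type} [DecidableEq V] {G : SimpleGraph V}

/-- In an acyclic graph, a walk between two distinct neighbors of `v` passes through `v`. -/
private lemma mem_support_of_adj_adj (hacyc : G.IsAcyclic) {v u w : V}
    (hu : G.Adj v u) (hw : G.Adj v w) (huw : u ≠ w) (p : G.Walk u w) : v ∈ p.support := by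
  have h2 : (Walk.cons hu.symm hw.toWalk).IsPath := by
    simp [Walk.isPath_def, hu.ne', hw.ne, huw]
  have hq := hacyc.path_unique ⟨p.bypass, p.bypass_isPath⟩ ⟨_, h2⟩
  have hv : v ∈ p.bypass.support := by
    rw [show p.bypass = Walk.cons hu.symm hw.toWalk from congrArg Subtype.val hq]
    simp
  exact p.support_bypass_subset hv

/-- A closed walk at a neighbor `w` of `v` avoiding the edge `{v,w}` avoids `v` entirely. -/
private lemma not_mem_support_of_edge_not_mem (hacyc : G.IsAcyclic) {v w : V}
    (h : G.Adj v w) {t : G.Walk w w} (ht : s(v, w) ∉ t.edges) : v ∉ t.support := by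
  classical
  intro hv
  have hcount := t.count_support_takeUntil_eq_one hv
  obtain ⟨u, hadj, t', hrev⟩ := Walk.exists_eq_cons_of_ne h.ne (t.takeUntil v hv).reverse
  have hsupp : (t.takeUntil v hv).reverse.support = v :: t'.support := by
    rw [hrev, Walk.support_cons]
  have hvt' : v ∉ t'.support := by
    have hc2 : ((t.takeUntil v hv).support.count v : ℕ) = (v :: t'.support).count v := by
      rw [← hsupp, Walk.support_reverse, List.count_reverse]
    rw [hcount] at hc2
    rw [List.count_cons_self] at hc2
    intro hmem
    have := List.count_pos_iff.mpr hmem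
    omega
  have huw : u = w := by
    by_contra hne
    exact hvt' (mem_support_of_adj_adj hacyc hadj h hne t')
  subst huw
  apply ht
  have h1 : s(v, u) ∈ (t.takeUntil v hv).reverse.edges := by
    rw [hrev, Walk.edges_cons]
    exact List.mem_cons_self
  rw [Walk.edges_reverse, List.mem_reverse] at h1
  exact t.edges_takeUntil_subset hv h1

private lemma edge_not_mem_of_not_mem_support {v w : V} {t : G.Walk w w}
    (hs : v ∉ t.support) : s(v, w) ∉ t.edges :=
  fun he => hs (t.fst_mem_support_of_mem_edges he)

/-- Uniqueness of the first-return splitting of a walk. -/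
private lemma split_unique {v w : V} (r₁ : G.Walk w v) :
    ∀ (r₂ : G.Walk w v) (s₁ s₂ : G.Walk v v),
      r₁.support.count v = 1 → r₂.support.count v = 1 →
      r₁.append s₁ = r₂.append s₂ → r₁ = r₂ ∧ s₁ = s₂ := by
  induction r₁ with
  | nil =>
    intro r₂ s₁ s₂ h1 h2 heq
    cases r₂ with
    | nil => exact ⟨rfl, by simpa using heq⟩
    | cons hadj₂ t₂ =>
      exfalso
      rw [Walk.support_cons, List.count_cons_self] at h2
      have := List.count_pos_iff.mpr t₂.end_mem_support
      omega
  | @cons a b c hadj t ih =>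
    intro r₂ s₁ s₂ h1 h2 heq
    have hwv : a ≠ c := by
      intro h
      subst h
      rw [Walk.support_cons, List.count_cons_self] at h1
      have := List.count_pos_iff.mpr t.end_mem_support
      omega
    cases r₂ with
    | nil => exact absurd rfl hwv
    | cons hadj₂ t₂ =>
      rw [Walk.cons_append, Walk.cons_append] at heq
      injection heq with hb hh hp hpeq
      subst hh
      have hp' := eq_of_heq hpeq
      rw [Walk.support_cons, List.count_cons_of_ne hwv] at h1 h2
      obtain ⟨ht, hs⟩ := ih t₂ s₁ s₂ h1 h2 hp'
      cases ht
      exact ⟨rfl, hs⟩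

private lemma nat_card_sigma {ι : Type} [Fintype ι] (β : ι → Type) [∀ i, Finite (β i)] :
    Nat.card (Σ i, β i) = ∑ i, Nat.card (β i) := by
  letI : ∀ i, Fintype (β i) := fun i => Fintype.ofFinite _
  rw [Nat.card_eq_fintype_card, Fintype.card_sigma]
  exact Finset.sum_congr rfl fun i _ => (Nat.card_eq_fintype_card).symm

private lemma walk_subtype_finite [∀ v : V, Fintype (G.neighborSet v)] (u : V) (n : ℕ)
    (P : G.Walk u u → Prop) : Finite {p : G.Walk u u // p.length = n ∧ P p} := by
  haveI : Fintype {p : G.Walk u u // p.length = n} := G.fintypeSubtypeWalkLength u u n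
  exact Finite.of_injective
    (fun x => (⟨x.1, x.2.1⟩ : {p : G.Walk u u // p.length = n}))
    (by intro a b hab; apply Subtype.ext; simpa using congrArg Subtype.val hab)

/-- First-return decomposition map. -/
private def Phi (hacyc : G.IsAcyclic) {v v' : V} (h : G.Adj v v') (k : ℕ)
    (x : Σ w : {w : V // G.Adj v w ∧ w ≠ v'}, Σ a : Fin (k + 1),
        {t : G.Walk w.1 w.1 // t.length = a.1 ∧ s(w.1, v) ∉ t.edges} ×
        {s : G.Walk v v // s.length = k - a.1 ∧ s(v, v') ∉ s.edges}) :
    {p : G.Walk v v // p.length = k + 2 ∧ s(v, v') ∉ p.edges} :=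
  ⟨Walk.cons x.1.2.1 ((x.2.2.1.1.concat x.1.2.1.symm).append x.2.2.2.1), by
    obtain ⟨⟨w, hw1, hw2⟩, ⟨a, ha⟩, ⟨t, ht1, ht2⟩, ⟨s, hs1, hs2⟩⟩ := x
    constructor
    · simp only [Walk.length_cons, Walk.length_append, Walk.length_concat, ht1, hs1]
      omega
    · intro hmem
      rw [Walk.edges_cons] at hmem
      rcases List.mem_cons.mp hmem with hhead | htail
      · rcases Sym2.eq_iff.mp hhead with ⟨-, h2⟩ | ⟨h1, -⟩
        · exact hw2 h2.symm
        · exact hw1.ne h1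
      · rw [Walk.edges_append] at htail
        rcases List.mem_append.mp htail with hmid | hs'
        · rw [Walk.edges_concat, List.concat_eq_append] at hmid
          rcases List.mem_append.mp hmid with hint | hlast
          · have hvt : v ∉ t.support :=
              not_mem_support_of_edge_not_mem hacyc hw1 (by rw [Sym2.eq_swap]; exact ht2)
            exact hvt (t.fst_mem_support_of_mem_edges hint)
          · rcases Sym2.eq_iff.mp (List.mem_singleton.mp hlast) with ⟨h1, -⟩ | ⟨-, h2⟩
            · exact hw1.ne h1
            · exact hw2 h2.symm
        · exact hs2 hs'⟩

private lemma Phi_bijective (hacyc : G.IsAcyclic) {v v' : V} (h : G.Adj v v') (k : ℕ) :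
    Function.Bijective (Phi (G := G) hacyc h k) := by
  constructor
  · rintro ⟨⟨w₁, hw1, hw2⟩, ⟨a₁, ha₁⟩, ⟨t₁, ht11, ht12⟩, ⟨s₁, hs11, hs12⟩⟩
      ⟨⟨w₂, hw1', hw2'⟩, ⟨a₂, ha₂⟩, ⟨t₂, ht21, ht22⟩, ⟨s₂, hs21, hs22⟩⟩ hxy
    have hxy' := congrArg Subtype.val hxy
    dsimp only [Phi] at hxy'
    injection hxy' with hww hhh hheq hpeq
    subst hhh
    have hq := eq_of_heq hpeq
    have hvt₁ : v ∉ t₁.support :=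
      not_mem_support_of_edge_not_mem hacyc hw1 (by rw [Sym2.eq_swap]; exact ht12)
    have hvt₂ : v ∉ t₂.support :=
      not_mem_support_of_edge_not_mem hacyc hw1' (by rw [Sym2.eq_swap]; exact ht22)
    have hc₁ : (t₁.concat hw1.symm).support.count v = 1 := by
      rw [Walk.support_concat, List.count_append,
        List.count_eq_zero_of_not_mem hvt₁]
      simp
    have hc₂ : (t₂.concat hw1'.symm).support.count v = 1 := by
      rw [Walk.support_concat, List.count_append,
        List.count_eq_zero_of_not_mem hvt₂]
      simp
    obtain ⟨htc, hs⟩ := split_unique _ _ _ _ hc₁ hc₂ hq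
    obtain ⟨hveq, hcopy⟩ := Walk.concat_inj htc
    rw [Walk.copy_rfl_rfl] at hcopy
    subst hcopy
    subst hs
    have haa : a₁ = a₂ := by
      have e1 : t₁.length = a₁ := ht11
      have e2 : t₁.length = a₂ := ht21
      omega
    subst haa
    rfl
  · rintro ⟨p, hp1, hp2⟩
    have hnn : ¬ p.Nil := by
      rw [Walk.not_nil_iff_lt_length]
      omega
    obtain ⟨w, h1, q, rfl⟩ := Walk.not_nil_iff.mp hnn
    · have hq1 : q.length = k + 1 := by
        simpa using hp1
      have hfirst : s(v, w) ∈ (Walk.cons h1 q).edges := by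
        rw [Walk.edges_cons]; exact List.mem_cons_self
      have hw2 : w ≠ v' := by
        intro hvv
        subst hvv
        exact hp2 hfirst
      have hv : v ∈ q.support := q.end_mem_support
      have hcount := q.count_support_takeUntil_eq_one hv
      have hspec := q.take_spec hv
      obtain ⟨u, hadj2, t', hrev⟩ := Walk.exists_eq_cons_of_ne h1.ne (q.takeUntil v hv).reverse
      have hvt' : v ∉ t'.support := by
        have hsupp : (q.takeUntil v hv).reverse.support = v :: t'.support := by
          rw [hrev, Walk.support_cons]
        have hc2 : (v :: t'.support).count v = 1 := by
          rw [← hsupp, Walk.support_reverse, List.count_reverse]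
          exact hcount
        rw [List.count_cons_self] at hc2
        intro hmem
        have := List.count_pos_iff.mpr hmem
        omega
      have huw : u = w := by
        by_contra hne
        exact hvt' (mem_support_of_adj_adj hacyc hadj2 h1 hne t')
      subst huw
      have hr : q.takeUntil v hv = t'.reverse.concat hadj2.symm := by
        have h0 := congrArg Walk.reverse hrev
        rw [Walk.reverse_reverse] at h0
        rw [h0, Walk.reverse_cons, Walk.concat_eq_append]
      have hlen : t'.length + 1 + (q.dropUntil v hv).length = k + 1 := by
        have h0 := congrArg Walk.length hspec
        rw [Walk.length_append, hr, Walk.length_concat, Walk.length_reverse, hq1] at h0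
        omega
      refine ⟨⟨⟨u, h1, hw2⟩, ⟨t'.length, by omega⟩, ⟨t'.reverse, Walk.length_reverse t', ?_⟩,
        ⟨q.dropUntil v hv, by show (q.dropUntil v hv).length = k - t'.length; omega, ?_⟩⟩, ?_⟩
      · intro hmem
        apply hvt'
        have := t'.reverse.snd_mem_support_of_mem_edges hmem
        rwa [Walk.support_reverse, List.mem_reverse] at this
      · intro hmem
        apply hp2
        rw [Walk.edges_cons]
        exact List.mem_cons_of_mem _ (q.edges_dropUntil_subset hv hmem)
      · apply Subtype.ext
        show Walk.cons h1 ((t'.reverse.concat h1.symm).append (q.dropUntil v hv))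
            = Walk.cons h1 q
        congr 1
        conv_rhs => rw [← hspec]
        congr 1
        exact hr.symm

private lemma count_closed_walks [∀ v : V, Fintype (G.neighborSet v)]
    (hacyc : G.IsAcyclic) {m : ℕ} (hdeg : ∀ v : V, G.degree v = m) :
    ∀ (k : ℕ) (v v' : V) (_ : G.Adj v v'),
      Nat.card {p : G.Walk v v // p.length = k ∧ s(v, v') ∉ p.edges} = fA (m - 1) k := by
  intro k
  induction k using Nat.strong_induction_on with
  | _ k ih =>
    rcases k with _ | (_ | k)
    · intro v v' h
      rw [fA_zero]
      rw [Nat.card_eq_one_iff_unique]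
      constructor
      · constructor
        rintro ⟨p, hp1, hp2⟩ ⟨q, hq1, hq2⟩
        have hp' : p = Walk.nil := (Walk.nil_iff_length_eq.mpr hp1).eq_nil
        have hq' : q = Walk.nil := (Walk.nil_iff_length_eq.mpr hq1).eq_nil
        exact Subtype.ext (hp'.trans hq'.symm)
      · exact ⟨⟨Walk.nil, rfl, by simp⟩⟩
    · intro v v' h
      rw [fA_one]
      haveI : IsEmpty {p : G.Walk v v // p.length = 1 ∧ s(v, v') ∉ p.edges} := by
        constructor
        rintro ⟨p, hp1, -⟩
        cases p with
        | nil => simp at hp1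
        | cons hadj q =>
          rw [Walk.length_cons, add_left_inj] at hp1
          exact hadj.ne (Walk.eq_of_length_eq_zero hp1).symm
      exact Nat.card_of_isEmpty
    · intro v v' h
      haveI hWfin : Finite {w : V // G.Adj v w ∧ w ≠ v'} :=
        Finite.of_injective
          (fun w => (⟨w.1, w.2.1⟩ : G.neighborSet v))
          (by intro a b hab; apply Subtype.ext; simpa using congrArg Subtype.val hab)
      haveI := Fintype.ofFinite {w : V // G.Adj v w ∧ w ≠ v'}
      haveI hTfin : ∀ (w : {w : V // G.Adj v w ∧ w ≠ v'}) (a : Fin (k + 1)),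
          Finite ({t : G.Walk w.1 w.1 // t.length = a.1 ∧ s(w.1, v) ∉ t.edges} ×
            {s : G.Walk v v // s.length = k - a.1 ∧ s(v, v') ∉ s.edges}) := by
        intro w a
        haveI := walk_subtype_finite (G := G) w.1 a.1 (fun t => s(w.1, v) ∉ t.edges)
        haveI := walk_subtype_finite (G := G) v (k - a.1) (fun s => s(v, v') ∉ s.edges)
        infer_instance
      have hcard := (Nat.card_eq_of_bijective _ (Phi_bijective hacyc h k)).symm
      rw [hcard, nat_card_sigma]
      have hinner : ∀ w : {w : V // G.Adj v w ∧ w ≠ v'},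
          Nat.card (Σ a : Fin (k + 1),
            {t : G.Walk w.1 w.1 // t.length = a.1 ∧ s(w.1, v) ∉ t.edges} ×
            {s : G.Walk v v // s.length = k - a.1 ∧ s(v, v') ∉ s.edges})
          = ∑ a ∈ Finset.range (k + 1), fA (m - 1) a * fA (m - 1) (k - a) := by
        intro w
        rw [nat_card_sigma]
        rw [← Fin.sum_univ_eq_sum_range (fun a => fA (m - 1) a * fA (m - 1) (k - a)) (k + 1)]
        apply Finset.sum_congr rfl
        intro a _
        rw [Nat.card_prod]
        rw [ih a.1 (by omega) w.1 v w.2.1.symm, ih (k - a.1) (by omega) v v' h]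
      rw [Finset.sum_congr rfl (fun w _ => hinner w), Finset.sum_const, smul_eq_mul,
        Finset.card_univ]
      have hWcard : Fintype.card {w : V // G.Adj v w ∧ w ≠ v'} = m - 1 := by
        classical
        have hvmem : v' ∈ G.neighborFinset v := by
          rw [SimpleGraph.mem_neighborFinset]; exact h
        have e : {w : V // G.Adj v w ∧ w ≠ v'} ≃ ((G.neighborFinset v).erase v' : Finset V) :=
          Equiv.subtypeEquivRight (fun w => by
            simp [Finset.mem_erase, SimpleGraph.mem_neighborFinset, and_comm])
        rw [← Nat.card_eq_fintype_card, Nat.card_congr e, Nat.card_eq_finsetCard,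
          Finset.card_erase_of_mem hvmem, SimpleGraph.card_neighborFinset_eq_degree, hdeg v]
      rw [hWcard, fA_rec]

end Graph

/-- **Closed form of the restricted-return generating function on the `m`-regular tree:**
for `0 < |z| < 1/m`, `A(z) = ∑ A_k z^k` converges absolutely and
`A(z) = (1 - √(1 - 4(m-1)z²)) / (2(m-1)z²)`. -/
theorem stmt_15
    (m : ℕ) (hm : 3 ≤ m)
    (V : Type) (G : SimpleGraph V)
    [∀ v : V, Fintype (G.neighborSet v)]
    (hconn : G.Connected) (hacyc : G.IsAcyclic)
    (hdeg : ∀ v : V, G.degree v = m)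
    (e : V) (x₁ : Sym2 V) (hx₁ : x₁ ∈ G.edgeSet) (hex₁ : e ∈ x₁)
    (A : ℕ → ℕ)
    (hA : ∀ k : ℕ, A k = Nat.card {p : G.Walk e e // p.length = k ∧ x₁ ∉ p.edges})
    (z : ℝ) (hz0 : 0 < |z|) (hz : |z| < 1 / m) :
    Summable (fun k : ℕ => |(A k : ℝ) * z ^ k|) ∧
    (∑' k : ℕ, (A k : ℝ) * z ^ k) =
      (1 - Real.sqrt (1 - 4 * ((m : ℝ) - 1) * z ^ 2)) / (2 * ((m : ℝ) - 1) * z ^ 2) := by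
  classical
  -- Step 1: identify `A` with `fA (m-1)`.
  have hAf : ∀ k, A k = fA (m - 1) k := by
    revert hx₁ hex₁ hA
    induction x₁ using Sym2.ind with
    | _ a b =>
      intro hx₁ hex₁ hA
      rw [SimpleGraph.mem_edgeSet] at hx₁
      rcases Sym2.mem_iff.mp hex₁ with rfl | rfl
      · intro k
        rw [hA k, count_closed_walks hacyc hdeg k e b hx₁]
      · intro k
        rw [hA k, show (s(a, e) : Sym2 V) = s(e, a) from Sym2.eq_swap,
          count_closed_walks hacyc hdeg k e a hx₁.symm]
  -- Step 2: numeric setup.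
  have hm1 : 1 ≤ m := by omega
  have hcast : ((m - 1 : ℕ) : ℝ) = (m : ℝ) - 1 := by
    push_cast [Nat.cast_sub hm1]
    ring
  have hmR : (3 : ℝ) ≤ (m : ℝ) := by exact_mod_cast hm
  have hzne : z ≠ 0 := by
    intro hz'
    rw [hz', abs_zero] at hz0
    exact lt_irrefl _ hz0
  set x : ℝ := ((m - 1 : ℕ) : ℝ) * z ^ 2 with hxdef
  have hz2pos : 0 < z ^ 2 := by positivity
  have hcpos : (0 : ℝ) < ((m - 1 : ℕ) : ℝ) := by
    have : 0 < m - 1 := by omega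
    exact_mod_cast this
  have hx0 : 0 < x := mul_pos hcpos hz2pos
  have hmpos : (0 : ℝ) < (m : ℝ) := by linarith
  have hx14 : x < 1 / 4 := by
    have hz2 : z ^ 2 < (1 / (m : ℝ)) ^ 2 := by
      rw [← _root_.sq_abs z]
      exact pow_lt_pow_left₀ hz (abs_nonneg z) two_ne_zero
    have hstep : x < ((m - 1 : ℕ) : ℝ) * (1 / (m : ℝ)) ^ 2 :=
      mul_lt_mul_of_pos_left hz2 hcpos
    have hm2 : (0 : ℝ) < (m : ℝ) ^ 2 := by positivity
    have hfin : ((m - 1 : ℕ) : ℝ) * (1 / (m : ℝ)) ^ 2 < 1 / 4 := by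
      rw [hcast, show ((1 : ℝ) / (m : ℝ)) ^ 2 = 1 / (m : ℝ) ^ 2 by rw [div_pow, one_pow],
        mul_one_div, div_lt_div_iff₀ hm2 (by norm_num : (0 : ℝ) < 4)]
      nlinarith [sq_nonneg ((m : ℝ) - 3)]
    linarith
  obtain ⟨hcsum, hcval⟩ := catalan_gf hx0 hx14
  -- Step 3: reindex the sum over even indices.
  set g : ℕ → ℝ := fun k => (A k : ℝ) * z ^ k with hgdef
  have hg_even : ∀ n : ℕ, g (2 * n) = (catalan n : ℝ) * x ^ n := by
    intro n
    have : x ^ n = ((m - 1 : ℕ) : ℝ) ^ n * z ^ (2 * n) := by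
      rw [hxdef, mul_pow, pow_mul]
    rw [hgdef]
    simp only []
    rw [hAf (2 * n), fA_even, this]
    push_cast
    ring
  have hg_odd : ∀ k : ℕ, ¬ Even k → g k = 0 := by
    intro k hk
    rw [hgdef]
    simp only []
    rw [hAf k, fA_odd hk]
    simp
  have hg_nonneg : ∀ k : ℕ, 0 ≤ g k := by
    intro k
    rcases Nat.even_or_odd k with ⟨n, hn⟩ | hodd
    · have : k = 2 * n := by omega
      rw [this, hg_even n]
      positivity
    · rw [hg_odd k (Nat.not_even_iff_odd.mpr hodd)]
  have hinj : Function.Injective (fun n : ℕ => 2 * n) := fun a b hab => by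
    have hab' : 2 * a = 2 * b := hab
    omega
  have hrange0 : ∀ k : ℕ, k ∉ Set.range (fun n : ℕ => 2 * n) → g k = 0 := by
    intro k hkr
    apply hg_odd
    rintro ⟨r, hr⟩
    exact hkr ⟨r, show 2 * r = k by omega⟩
  have hsupp : Function.support g ⊆ Set.range (fun n : ℕ => 2 * n) := by
    intro k hk
    by_contra hnk
    exact hk (hrange0 k hnk)
  have hcomp : (g ∘ fun n : ℕ => 2 * n) = fun n : ℕ => (catalan n : ℝ) * x ^ n :=
    funext fun n => hg_even n
  have hsumg : Summable g := by
    rw [← Function.Injective.summable_iff hinj hrange0, hcomp]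
    exact hcsum
  have habsg : (fun k : ℕ => |(A k : ℝ) * z ^ k|) = g :=
    funext fun k => abs_of_nonneg (hg_nonneg k)
  constructor
  · rw [habsg]
    exact hsumg
  · have htsum : (∑' k : ℕ, g k) = ∑' n : ℕ, (catalan n : ℝ) * x ^ n := by
      rw [← Function.Injective.tsum_eq hinj hsupp]
      exact tsum_congr fun n => hg_even n
    have hxe : x = ((m : ℝ) - 1) * z ^ 2 := by rw [hxdef, hcast]
    calc (∑' k : ℕ, (A k : ℝ) * z ^ k) = ∑' n : ℕ, (catalan n : ℝ) * x ^ n := htsum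
      _ = (1 - Real.sqrt (1 - 4 * x)) / (2 * x) := hcval
      _ = (1 - Real.sqrt (1 - 4 * ((m : ℝ) - 1) * z ^ 2)) / (2 * ((m : ℝ) - 1) * z ^ 2) := by
          rw [hxe, mul_assoc, mul_assoc]
end

section
/- The numbers A_k satisfy the recursion A_{2k} = (m−1) · Σ_{l=0}^{k−1} A_{2l} · A_{2(k−l−1)} for every k ≥ 1, and A_j = 0 for every odd j. -/
namespace StmtAux
set_option linter.unusedSectionVars false

open SimpleGraph Walk

variable {V : Type} [DecidableEq V] {G : SimpleGraph V}

lemma path_length_eq_dist (hconn : G.Connected) (hacyc : G.IsAcyclic)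
    {u v : V} (p : G.Walk u v) (hp : p.IsPath) : p.length = G.dist u v := by
  obtain ⟨q, hq⟩ := hconn.exists_walk_length_eq_dist u v
  have huniq := hacyc.path_unique ⟨p, hp⟩ ⟨q.bypass, q.bypass_isPath⟩
  have hpq : p = q.bypass := congrArg Subtype.val huniq
  have h1 : p.length ≤ G.dist u v := by
    rw [hpq, ← hq]; exact q.length_bypass_le
  exact le_antisymm h1 (SimpleGraph.dist_le p)

lemma adj_dist_parity (hconn : G.Connected) (hacyc : G.IsAcyclic)
    {u w : V} (h : G.Adj u w) (v : V) :
    (G.dist u v + G.dist w v) % 2 = 1 := by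
  obtain ⟨q, hq⟩ := hconn.exists_walk_length_eq_dist w v
  have hPp : q.bypass.IsPath := q.bypass_isPath
  have hPl : q.bypass.length = G.dist w v := path_length_eq_dist hconn hacyc _ hPp
  by_cases hu : u ∈ q.bypass.support
  · have hQl : (q.bypass.takeUntil u hu).length = G.dist w u :=
      path_length_eq_dist hconn hacyc _ (hPp.takeUntil hu)
    have hRl : (q.bypass.dropUntil u hu).length = G.dist u v :=
      path_length_eq_dist hconn hacyc _ (hPp.dropUntil hu)
    have hsum : (q.bypass.takeUntil u hu).length + (q.bypass.dropUntil u hu).length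
        = q.bypass.length := by
      conv_rhs => rw [← q.bypass.take_spec hu]
      rw [Walk.length_append]
    have hwu : G.dist w u = 1 := SimpleGraph.dist_eq_one_iff_adj.mpr h.symm
    omega
  · have hc : (Walk.cons h q.bypass).IsPath := hPp.cons hu
    have := path_length_eq_dist hconn hacyc _ hc
    rw [Walk.length_cons, hPl] at this
    omega

lemma walk_parity (hconn : G.Connected) (hacyc : G.IsAcyclic)
    {a b : V} (p : G.Walk a b) : (p.length + G.dist a b) % 2 = 0 := by
  induction p with
  | nil => simp [SimpleGraph.dist_self]
  | @cons a c b h q ih =>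
    have h2 := adj_dist_parity hconn hacyc h b
    rw [Walk.length_cons]
    omega

lemma closed_even (hconn : G.Connected) (hacyc : G.IsAcyclic)
    {u : V} (p : G.Walk u u) : p.length % 2 = 0 := by
  have := walk_parity hconn hacyc p
  rw [SimpleGraph.dist_self] at this
  omega

lemma neighbor_unique (hacyc : G.IsAcyclic) {u v w : V} (hv : G.Adj u v) (hw : G.Adj u w)
    (p : G.Walk v w) (hu : u ∉ p.support) : v = w := by
  have hP : p.bypass.IsPath := p.bypass_isPath
  have hu' : u ∉ p.bypass.support := fun hh => hu (p.support_bypass_subset hh)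
  have h1 : (Walk.cons hv p.bypass).IsPath := hP.cons hu'
  have h2 := hacyc.path_unique ⟨Walk.cons hv p.bypass, h1⟩ (SimpleGraph.Path.singleton hw)
  have h3 : (Walk.cons hv p.bypass).length = (Walk.cons hw Walk.nil).length := by
    rw [show (Walk.cons hv p.bypass) = (Walk.cons hw Walk.nil) from congrArg Subtype.val h2]
  simp only [Walk.length_cons, Walk.length_nil] at h3
  exact Walk.eq_of_length_eq_zero (p := p.bypass) (by omega)

lemma concat_decomp (hacyc : G.IsAcyclic) {u v : V} (hv : G.Adj u v) (a : G.Walk v u)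
    (ha : a.support.count u = 1) :
    ∃ q : G.Walk v v, u ∉ q.support ∧ a = q.concat hv.symm := by
  obtain ⟨w, h', c, hc⟩ := Walk.exists_eq_cons_of_ne hv.ne a.reverse
  have ha' : a = c.reverse.concat h'.symm := by
    have h2 := congrArg Walk.reverse hc
    rwa [Walk.reverse_reverse, Walk.reverse_cons] at h2
  have hsupp : a.support = c.reverse.support ++ [u] := by
    rw [ha', Walk.support_concat]
  have hu : u ∉ c.reverse.support := by
    intro hmem
    have h3 : 1 ≤ c.reverse.support.count u := List.one_le_count_iff.mpr hmem
    rw [hsupp, List.count_append] at ha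
    have h4 : List.count u [u] = 1 := by simp
    omega
  have hwv : v = w := neighbor_unique hacyc hv h' c.reverse hu
  subst hwv
  exact ⟨c.reverse, hu, ha'⟩

lemma first_return (hacyc : G.IsAcyclic) {u v : V} (hv : G.Adj u v) (t : G.Walk v u) :
    ∃ (q : G.Walk v v) (r : G.Walk u u),
      u ∉ q.support ∧ t = (q.concat hv.symm).append r := by
  have hu : u ∈ t.support := t.end_mem_support
  obtain ⟨q, hq, ha⟩ := concat_decomp hacyc hv (t.takeUntil u hu)
    (t.count_support_takeUntil_eq_one hu)
  exact ⟨q, t.dropUntil u hu, hq, by conv_lhs => rw [← t.take_spec hu, ha]⟩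

lemma mem_support_iff_edge (hacyc : G.IsAcyclic) {u v : V} (hv : G.Adj u v) (q : G.Walk v v) :
    u ∈ q.support ↔ s(v, u) ∈ q.edges := by
  constructor
  · intro hu
    obtain ⟨q0, hq0, hEq⟩ := concat_decomp hacyc hv (q.takeUntil u hu)
      (q.count_support_takeUntil_eq_one hu)
    refine q.edges_takeUntil_subset hu ?_
    rw [hEq, Walk.edges_concat]
    simp
  · intro he
    exact q.snd_mem_support_of_mem_edges he


lemma second_vertex_eq {a b c₁ c₂ : V} {h₁ : G.Adj a c₁} {h₂ : G.Adj a c₂}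
    {p₁ : G.Walk c₁ b} {p₂ : G.Walk c₂ b}
    (heq : Walk.cons h₁ p₁ = Walk.cons h₂ p₂) : c₁ = c₂ := by
  have h := congrArg Walk.support heq
  rw [Walk.support_cons, Walk.support_cons, p₁.support_eq_cons, p₂.support_eq_cons] at h
  simp only [List.cons.injEq] at h
  exact h.2.1

lemma cons_inj_same {a b c : V} {h₁ h₂ : G.Adj a c} {p₁ p₂ : G.Walk c b}
    (heq : Walk.cons h₁ p₁ = Walk.cons h₂ p₂) : p₁ = p₂ := by
  injection heq

lemma split_unique {u : V} {a b : V} (q₁ : G.Walk a b) :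
    ∀ (q₂ : G.Walk a b) {h₁ h₂ : G.Adj b u} (r₁ r₂ : G.Walk u u),
    u ∉ q₁.support → u ∉ q₂.support →
    q₁.append (Walk.cons h₁ r₁) = q₂.append (Walk.cons h₂ r₂) →
    q₁ = q₂ ∧ r₁ = r₂ := by
  induction q₁ with
  | nil =>
    intro q₂ h₁ h₂ r₁ r₂ hu₁ hu₂ heq
    cases q₂ with
    | nil =>
      rw [Walk.nil_append, Walk.nil_append] at heq
      exact ⟨rfl, cons_inj_same heq⟩
    | @cons _ c _ g' t' =>
      rw [Walk.nil_append, Walk.cons_append] at heq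
      have hc : u = c := second_vertex_eq heq
      subst hc
      exact absurd (by rw [Walk.support_cons]; exact List.mem_cons_of_mem _ t'.start_mem_support) hu₂
  | @cons _ c _ g t ih =>
    intro q₂ h₁ h₂ r₁ r₂ hu₁ hu₂ heq
    cases q₂ with
    | nil =>
      rw [Walk.nil_append, Walk.cons_append] at heq
      have hc : u = c := second_vertex_eq heq.symm
      subst hc
      exact absurd (by rw [Walk.support_cons]; exact List.mem_cons_of_mem _ t.start_mem_support) hu₁
    | @cons _ c' _ g' t' =>
      rw [Walk.cons_append, Walk.cons_append] at heq
      have hc : c = c' := second_vertex_eq heq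
      subst hc
      have ht := cons_inj_same heq
      have hu₁' : u ∉ t.support := fun hh =>
        hu₁ ((Walk.support_cons g t) ▸ List.mem_cons_of_mem _ hh)
      have hu₂' : u ∉ t'.support := fun hh =>
        hu₂ ((Walk.support_cons g' t') ▸ List.mem_cons_of_mem _ hh)
      obtain ⟨hq, hr⟩ := ih t' r₁ r₂ hu₁' hu₂' ht
      exact ⟨by rw [hq], hr⟩


lemma concat_append_eq {u a : V} (q : G.Walk a a) (h : G.Adj a u) (r : G.Walk u u) :
    (q.concat h).append r = q.append (Walk.cons h r) := by
  rw [Walk.concat_eq_append, ← Walk.append_assoc, Walk.cons_append, Walk.nil_append]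

lemma card_rec_s16 (hacyc : G.IsAcyclic) (u : V) (x : Sym2 V) (hux : u ∈ x) (n : ℕ) :
    Nat.card {p : G.Walk u u // p.length = n + 2 ∧ x ∉ p.edges}
      = Nat.card (Σ v : {v : V // G.Adj u v ∧ s(u, v) ≠ x}, Σ l : Fin (n + 1),
          {q : G.Walk v.1 v.1 // q.length = l.1 ∧ u ∉ q.support}
            × {r : G.Walk u u // r.length = n - l.1 ∧ x ∉ r.edges}) := by
  obtain ⟨y, hxy⟩ := Sym2.mem_iff_exists.mp hux
  symm
  apply Nat.card_eq_of_bijective (fun s =>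
    (⟨Walk.cons s.1.2.1 ((s.2.2.1.1.concat s.1.2.1.symm).append s.2.2.2.1), by
      obtain ⟨⟨v, hv, hvx⟩, ⟨l, hl⟩, ⟨q, hq, hqu⟩, ⟨r, hr, hrx⟩⟩ := s
      refine ⟨?_, ?_⟩
      · simp only [Walk.length_cons, Walk.length_append, Walk.length_concat, hq, hr]
        omega
      · intro hmem
        rw [Walk.edges_cons, Walk.edges_append, Walk.edges_concat, List.concat_eq_append] at hmem
        simp only [List.mem_cons, List.mem_append, List.mem_singleton] at hmem
        rcases hmem with h1 | (h2 | h3) | h4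
        · exact hvx h1.symm
        · exact hqu (hxy ▸ Walk.fst_mem_support_of_mem_edges q (hxy ▸ h2))
        · rcases h3 with h3 | h3
          · rw [Sym2.eq_swap] at h3
            exact hvx h3.symm
          · simp at h3
        · exact hrx h4⟩ :
      {p : G.Walk u u // p.length = n + 2 ∧ x ∉ p.edges}))
  constructor
  · rintro ⟨⟨v₁, hv₁, hvx₁⟩, ⟨l₁, hl₁⟩, ⟨q₁, hq₁, hqu₁⟩, ⟨r₁, hr₁, hrx₁⟩⟩
      ⟨⟨v₂, hv₂, hvx₂⟩, ⟨l₂, hl₂⟩, ⟨q₂, hq₂, hqu₂⟩, ⟨r₂, hr₂, hrx₂⟩⟩ heq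
    simp only [Subtype.mk.injEq] at heq
    have hv : v₁ = v₂ := second_vertex_eq heq
    subst hv
    have hP := cons_inj_same heq
    rw [concat_append_eq, concat_append_eq] at hP
    obtain ⟨hq, hr⟩ := split_unique q₁ q₂ r₁ r₂ hqu₁ hqu₂ hP
    subst hq
    subst hr
    have hl : l₁ = l₂ := hq₁.symm.trans hq₂
    subst hl
    rfl
  · rintro ⟨p, hlen, hpx⟩
    cases p with
    | nil => simp at hlen
    | @cons _ v _ hadj t =>
      have hvx : s(u, v) ≠ x := by
        intro hh
        exact hpx (by rw [Walk.edges_cons, ← hh]; exact List.mem_cons_self)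
      obtain ⟨q, r, hqu, ht⟩ := first_return hacyc hadj t
      have hlq : q.length + 1 + r.length = n + 1 := by
        rw [Walk.length_cons, ht, Walk.length_append, Walk.length_concat] at hlen
        omega
      refine ⟨⟨⟨v, hadj, hvx⟩, ⟨q.length, by omega⟩, ⟨q, rfl, hqu⟩, ⟨r, by show r.length = n - q.length; omega, ?_⟩⟩, ?_⟩
      · intro hh
        apply hpx
        rw [Walk.edges_cons, ht, Walk.edges_append]
        exact List.mem_cons_of_mem _ (List.mem_append_right _ hh)
      · apply Subtype.ext
        show Walk.cons hadj ((q.concat hadj.symm).append r) = Walk.cons hadj t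
        rw [ht]


lemma card_avoid_s16 (hacyc : G.IsAcyclic) {u v : V} (hv : G.Adj u v) (l : ℕ) :
    Nat.card {q : G.Walk v v // q.length = l ∧ u ∉ q.support}
      = Nat.card {q : G.Walk v v // q.length = l ∧ s(v, u) ∉ q.edges} :=
  Nat.card_congr (Equiv.subtypeEquivRight fun q =>
    and_congr_right fun _ => not_congr (mem_support_iff_edge hacyc hv q))

lemma card_zero (u : V) (x : Sym2 V) :
    Nat.card {p : G.Walk u u // p.length = 0 ∧ x ∉ p.edges} = 1 := by
  rw [Nat.card_eq_one_iff_unique]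
  constructor
  · constructor
    rintro ⟨p, hp, -⟩ ⟨q, hq, -⟩
    have hp' : p = Walk.nil := by cases p with | nil => rfl | cons h t => simp at hp
    have hq' : q = Walk.nil := by cases q with | nil => rfl | cons h t => simp at hq
    exact Subtype.ext (hp'.trans hq'.symm)
  · exact ⟨⟨Walk.nil, rfl, by simp⟩⟩

lemma fin_cond [∀ v : V, Fintype (G.neighborSet v)] {u w : V} (n : ℕ) (P : G.Walk u w → Prop) :
    Finite {p : G.Walk u w // p.length = n ∧ P p} :=
  Finite.of_injective (fun p => (⟨p.1, p.2.1⟩ : {p : G.Walk u w // p.length = n}))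
    (fun a b h => by apply Subtype.ext; have h2 := congrArg Subtype.val h; exact h2)

lemma fin_nbr [∀ v : V, Fintype (G.neighborSet v)] (u : V) (x : Sym2 V) :
    Finite {v : V // G.Adj u v ∧ s(u, v) ≠ x} :=
  Finite.of_injective (fun v => (⟨v.1, v.2.1⟩ : G.neighborSet u))
    (fun a b h => by apply Subtype.ext; have h2 := congrArg Subtype.val h; exact h2)

lemma card_nbr [∀ v : V, Fintype (G.neighborSet v)] (u : V) (x : Sym2 V)
    (hx : x ∈ G.edgeSet) (hux : u ∈ x) :
    Nat.card {v : V // G.Adj u v ∧ s(u, v) ≠ x} = G.degree u - 1 := by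
  obtain ⟨v₀, rfl⟩ := Sym2.mem_iff_exists.mp hux
  have hv₀ : G.Adj u v₀ := hx
  have e1 : {v : V // G.Adj u v ∧ s(u, v) ≠ s(u, v₀)}
      ≃ ((G.neighborFinset u).erase v₀ : Finset V) :=
    Equiv.subtypeEquivRight fun v => by
      constructor
      · rintro ⟨hadj, hne⟩
        exact Finset.mem_erase.mpr ⟨fun hh => hne (by rw [hh]),
          (SimpleGraph.mem_neighborFinset _ _ _).mpr hadj⟩
      · intro hmem
        obtain ⟨hne, hmem'⟩ := Finset.mem_erase.mp hmem
        exact ⟨(SimpleGraph.mem_neighborFinset _ _ _).mp hmem',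
          fun hh => hne (Sym2.congr_right.mp hh)⟩
  rw [Nat.card_congr e1, Nat.card_eq_fintype_card, Fintype.card_coe,
    Finset.card_erase_of_mem (by rwa [SimpleGraph.mem_neighborFinset]),
    SimpleGraph.card_neighborFinset_eq_degree]

end StmtAux

open scoped InnerProductSpace
open Complex Real

/-- **Recursion for the restricted return-walk counts on the `m`-regular tree:**
`A_{2k} = (m-1) ∑_{l=0}^{k-1} A_{2l} A_{2(k-l-1)}` for `k ≥ 1`, and `A_j = 0` for odd `j`. -/
theorem stmt_16
    (m : ℕ) (hm : 3 ≤ m)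
    (V : Type) (G : SimpleGraph V)
    [∀ v : V, Fintype (G.neighborSet v)]
    (hconn : G.Connected) (hacyc : G.IsAcyclic)
    (hdeg : ∀ v : V, G.degree v = m)
    (e : V) (x₁ : Sym2 V) (hx₁ : x₁ ∈ G.edgeSet) (hex₁ : e ∈ x₁)
    (A : ℕ → ℕ)
    (hA : ∀ k : ℕ, A k = Nat.card {p : G.Walk e e // p.length = k ∧ x₁ ∉ p.edges}) :
    (∀ k : ℕ, 1 ≤ k →
      A (2 * k) = (m - 1) * ∑ l ∈ Finset.range k, A (2 * l) * A (2 * (k - l - 1))) ∧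
    (∀ j : ℕ, Odd j → A j = 0) := by
  classical
  have hodd : ∀ (u : V) (x : Sym2 V) (j : ℕ), j % 2 = 1 →
      Nat.card {p : G.Walk u u // p.length = j ∧ x ∉ p.edges} = 0 := by
    intro u x j hj
    have hisE : IsEmpty {p : G.Walk u u // p.length = j ∧ x ∉ p.edges} := ⟨by
      rintro ⟨p, hp, -⟩
      have h2 := StmtAux.closed_even hconn hacyc p
      rw [hp] at h2
      omega⟩
    exact Nat.card_of_isEmpty
  have hstep : ∀ (u : V) (x : Sym2 V), x ∈ G.edgeSet → u ∈ x → ∀ n : ℕ,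
      (∀ j, j < n + 2 → ∀ (u' : V) (x' : Sym2 V), x' ∈ G.edgeSet → u' ∈ x' →
          Nat.card {p : G.Walk u' u' // p.length = j ∧ x' ∉ p.edges} = A j) →
      Nat.card {p : G.Walk u u // p.length = n + 2 ∧ x ∉ p.edges}
        = (m - 1) * ∑ l ∈ Finset.range (n + 1), A l * A (n - l) := by
    intro u x hx hux n IH
    rw [StmtAux.card_rec_s16 hacyc u x hux n]
    haveI F1 : Finite {v : V // G.Adj u v ∧ s(u, v) ≠ x} := StmtAux.fin_nbr u x
    haveI : Fintype {v : V // G.Adj u v ∧ s(u, v) ≠ x} := Fintype.ofFinite _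
    haveI F2 : ∀ (v : {v : V // G.Adj u v ∧ s(u, v) ≠ x}) (l : Fin (n + 1)),
        Fintype {q : G.Walk v.1 v.1 // q.length = l.1 ∧ u ∉ q.support} := fun v l =>
      @Fintype.ofFinite _ (StmtAux.fin_cond _ _)
    haveI F3 : ∀ (l : Fin (n + 1)),
        Fintype {r : G.Walk u u // r.length = n - l.1 ∧ x ∉ r.edges} := fun l =>
      @Fintype.ofFinite _ (StmtAux.fin_cond _ _)
    rw [Nat.card_eq_fintype_card, Fintype.card_sigma]
    have hv : ∀ v : {v : V // G.Adj u v ∧ s(u, v) ≠ x},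
        Fintype.card (Σ l : Fin (n + 1),
          {q : G.Walk v.1 v.1 // q.length = l.1 ∧ u ∉ q.support}
            × {r : G.Walk u u // r.length = n - l.1 ∧ x ∉ r.edges})
          = ∑ l ∈ Finset.range (n + 1), A l * A (n - l) := by
      intro v
      rw [Fintype.card_sigma, ← Fin.sum_univ_eq_sum_range]
      refine Finset.sum_congr rfl fun l _ => ?_
      rw [Fintype.card_prod, ← Nat.card_eq_fintype_card, ← Nat.card_eq_fintype_card]
      have hq : Nat.card {q : G.Walk v.1 v.1 // q.length = l.1 ∧ u ∉ q.support} = A l.1 := by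
        rw [StmtAux.card_avoid_s16 hacyc v.2.1 l.1]
        exact IH l.1 (by omega) v.1 s(v.1, u) v.2.1.symm (Sym2.mem_mk_left _ _)
      have hr : Nat.card {r : G.Walk u u // r.length = n - l.1 ∧ x ∉ r.edges} = A (n - l.1) :=
        IH (n - l.1) (by omega) u x hx hux
      rw [hq, hr]
    rw [Finset.sum_congr rfl (fun v _ => hv v), Finset.sum_const, smul_eq_mul,
      Finset.card_univ]
    have hcard : Fintype.card {v : V // G.Adj u v ∧ s(u, v) ≠ x} = m - 1 := by
      rw [← Nat.card_eq_fintype_card, StmtAux.card_nbr u x hx hux, hdeg u]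
    rw [hcard]
  have key : ∀ n : ℕ, ∀ (u : V) (x : Sym2 V), x ∈ G.edgeSet → u ∈ x →
      Nat.card {p : G.Walk u u // p.length = n ∧ x ∉ p.edges} = A n := by
    intro n
    induction n using Nat.strong_induction_on with
    | _ n IH =>
      intro u x hx hux
      match n, IH with
      | 0, IH => rw [StmtAux.card_zero u x, hA 0, StmtAux.card_zero e x₁]
      | 1, IH => rw [hodd u x 1 (by norm_num), hA 1, hodd e x₁ 1 (by norm_num)]
      | (n + 2), IH =>
        rw [hstep u x hx hux n (fun j hj u' x' hx' hux' => IH j hj u' x' hx' hux'),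
          hA (n + 2),
          hstep e x₁ hx₁ hex₁ n (fun j hj u' x' hx' hux' => IH j hj u' x' hx' hux')]
  constructor
  · intro k hk
    have h2 : 2 * k = (2 * k - 2) + 2 := by omega
    rw [hA (2 * k), h2,
      hstep e x₁ hx₁ hex₁ (2 * k - 2) (fun j hj u' x' hx' hux' => key j u' x' hx' hux')]
    congr 1
    have himg : ∑ l ∈ Finset.range (2 * k - 2 + 1), A l * A (2 * k - 2 - l)
        = ∑ l ∈ (Finset.range k).image (fun j => 2 * j), A l * A (2 * k - 2 - l) := by
      refine (Finset.sum_subset ?_ ?_).symm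
      · intro l hl
        simp only [Finset.mem_image, Finset.mem_range] at hl
        obtain ⟨j, hj, rfl⟩ := hl
        exact Finset.mem_range.mpr (by omega)
      · intro l hl hnl
        have hl' : l < 2 * k - 2 + 1 := Finset.mem_range.mp hl
        have hlo : l % 2 = 1 := by
          by_contra hcon
          apply hnl
          simp only [Finset.mem_image, Finset.mem_range]
          exact ⟨l / 2, by omega, by omega⟩
        rw [hA l, hodd e x₁ l hlo, zero_mul]
    rw [himg, Finset.sum_image (by intro a _ b _ hab; simp only at hab; omega)]
    refine Finset.sum_congr rfl fun j hj => ?_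
    have hjk : j < k := Finset.mem_range.mp hj
    have h3 : 2 * k - 2 - 2 * j = 2 * (k - j - 1) := by omega
    rw [h3]
  · intro j hj
    rw [hA j, hodd e x₁ j (Nat.odd_iff.mp hj)]
end
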